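/- arXiv:1105.1019 — 5 statements merged into one kernel-verified Lean document; each statement's English description precedes it below -/
import Mathlib

section
/- Let S and S' be sets of Hermitian operators on a finite-dimensional Hilbert space H_B such that every element of S commutes with every element of S'. Then there exists a finite index set V and a unitary isomorphism H_B ≅ ⊕_{β∈V} H_{β_l} ⊗ H_{β_r} under which every element of S acts as an operator of the form ⊕_β A_β ⊗ I_{β_r} and every element of S' acts as an operator of the form ⊕_β I_{β_l} ⊗ B_β. -/
/-!
Since the elements of `S` are self-adjoint, the orthogonal complement of an `S`-invariant subspace
is again invariant, so `H_B` is an orthogonal sum of minimal `S`-invariant subspaces. By Schur's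
lemma an `S`-intertwiner between two such pieces is zero or a multiple of an isometry; group the
pieces into classes of isometrically equivalent ones and transport one orthonormal basis of a
representative of each class to all its members. Then `S` acts by the same matrix `A_β` on every
piece of the class `β`, which is the form `A_β ⊗ I`. An operator `g` commuting with `S` has
intertwining compressions `P_W ∘ g` between pieces, so it only connects pieces of the same class,
and there by scalars `B_β j j'`, which is the form `I ⊗ B_β`.
-/

open Matrix
open scoped Kronecker InnerProductSpace

section CommutantDecomposition

variable {E : Type*} [NormedAddCommGroup E] [InnerProductSpace ℂ E]

namespace Submodule

def IsInvariantUnder (W : Submodule ℂ E) (F : Set (Module.End ℂ E)) : Prop :=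
  ∀ a ∈ F, W ∈ a.invtSubmodule

structure IsMinimalInvariantUnder (W : Submodule ℂ E) (F : Set (Module.End ℂ E)) : Prop where
  isInvariantUnder : W.IsInvariantUnder F
  ne_bot : W ≠ ⊥
  eq_bot_or_eq_of_le : ∀ W' ≤ W, W'.IsInvariantUnder F → W' = ⊥ ∨ W' = W

variable {F : Set (Module.End ℂ E)} {W : Submodule ℂ E}

theorem IsInvariantUnder.apply_mem (hW : W.IsInvariantUnder F) {a : Module.End ℂ E} (ha : a ∈ F)
    {x : E} (hx : x ∈ W) : a x ∈ W :=
  hW a ha hx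

theorem isInvariantUnder_top : (⊤ : Submodule ℂ E).IsInvariantUnder F :=
  fun a _ => Module.End.invtSubmodule.top_mem a

theorem IsInvariantUnder.inf {W' : Submodule ℂ E} (hW : W.IsInvariantUnder F)
    (hW' : W'.IsInvariantUnder F) : (W ⊓ W').IsInvariantUnder F :=
  fun a ha => Module.End.invtSubmodule.inf_mem (hW a ha) (hW' a ha)

theorem IsInvariantUnder.orthogonal (hF : ∀ a ∈ F, a.IsSymmetric) (hW : W.IsInvariantUnder F) :
    Wᗮ.IsInvariantUnder F :=
  fun a ha => (hF a ha).orthogonalComplement_mem_invtSubmodule (hW a ha)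

theorem IsInvariantUnder.starProjection_apply_comm (hF : ∀ a ∈ F, a.IsSymmetric)
    [W.HasOrthogonalProjection] (hW : W.IsInvariantUnder F) {a : Module.End ℂ E} (ha : a ∈ F)
    (x : E) : W.starProjection (a x) = a (W.starProjection x) := by
  have hcomm : Commute (W.starProjection : Module.End ℂ E) a :=
    LinearMap.IsIdempotentElem.commute_iff
      (ContinuousLinearMap.IsIdempotentElem.toLinearMap W.isIdempotentElem_starProjection) |>.mpr
      ⟨by simpa [range_starProjection] using hW a ha,
        by simpa [ker_starProjection] using (hW.orthogonal hF) a ha⟩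
  exact LinearMap.congr_fun hcomm.eq x

theorem IsMinimalInvariantUnder.eq_bot_or_eq_top (hW : W.IsMinimalInvariantUnder F)
    (P : Submodule ℂ W) (hP : (P.map W.subtype).IsInvariantUnder F) : P = ⊥ ∨ P = ⊤ := by
  refine (hW.eq_bot_or_eq_of_le _ (map_subtype_le W P) hP).imp (fun h => ?_) fun h => ?_
  · exact map_injective_of_injective W.injective_subtype (h.trans (map_bot _).symm)
  · exact map_injective_of_injective W.injective_subtype (h.trans (map_subtype_top W).symm)

variable [FiniteDimensional ℂ E]

theorem IsInvariantUnder.exists_isMinimalInvariantUnder_le (hW : W.IsInvariantUnder F)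
    (hne : W ≠ ⊥) : ∃ W₀ ≤ W, W₀.IsMinimalInvariantUnder F := by
  obtain ⟨W₀, ⟨hW₀W, hW₀, hW₀ne⟩, hmin⟩ :=
    wellFounded_lt.has_min {W' | W' ≤ W ∧ W'.IsInvariantUnder F ∧ W' ≠ ⊥} ⟨W, le_rfl, hW, hne⟩
  refine ⟨W₀, hW₀W, hW₀, hW₀ne, fun W' hle hW' => or_iff_not_imp_left.mpr fun hne' => ?_⟩
  exact hle.eq_of_not_lt (hmin W' ⟨hle.trans hW₀W, hW', hne'⟩)

theorem IsInvariantUnder.exists_orthogonal_minimal_decomposition (hF : ∀ a ∈ F, a.IsSymmetric)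
    (hW : W.IsInvariantUnder F) :
    ∃ s : Finset (Submodule ℂ E), (∀ W₀ ∈ s, W₀.IsMinimalInvariantUnder F) ∧
      (s : Set (Submodule ℂ E)).Pairwise IsOrtho ∧ s.sup id = W := by
  classical
  induction W using WellFoundedLT.induction with
  | ind W ih =>
    by_cases hne : W = ⊥
    · exact ⟨∅, by simp, by simp, by simp [hne]⟩
    obtain ⟨W₀, hW₀W, hW₀⟩ := hW.exists_isMinimalInvariantUnder_le hne
    have hlt : W₀ᗮ ⊓ W < W := by
      refine inf_le_right.lt_of_ne fun h => hW₀.ne_bot ?_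
      rw [eq_bot_iff, ← inf_orthogonal_eq_bot W₀]
      exact le_inf le_rfl (h ▸ hW₀W |>.trans inf_le_left)
    obtain ⟨s, hmin, horth, hsup⟩ := ih _ hlt ((hW₀.isInvariantUnder.orthogonal hF).inf hW)
    refine ⟨insert W₀ s, Finset.forall_mem_insert _ _ _ |>.mpr ⟨hW₀, hmin⟩, ?_, ?_⟩
    · rw [Finset.coe_insert, Set.pairwise_insert_of_symm]
      refine ⟨horth, fun W' hW' _ => (isOrtho_orthogonal_right W₀).mono_right ?_⟩
      exact (Finset.le_sup (f := id) hW').trans (hsup.trans_le inf_le_left)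
    · rw [Finset.sup_insert, hsup, id, sup_orthogonal_inf_of_hasOrthogonalProjection hW₀W]

end Submodule

open Submodule

theorem LinearMap.exists_smul_inner_map_map {V V' : Type*} [NormedAddCommGroup V]
    [InnerProductSpace ℂ V] [NormedAddCommGroup V'] [InnerProductSpace ℂ V'] {f : V →ₗ[ℂ] V'}
    (hf : f ≠ 0) {c : ℂ} (hc : ∀ x y, ⟪f x, f y⟫_ℂ = c * ⟪x, y⟫_ℂ) :
    ∃ r : ℂ, r ≠ 0 ∧ ∀ x y, ⟪(r • f) x, (r • f) y⟫_ℂ = ⟪x, y⟫_ℂ := by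
  obtain ⟨x₀, hx₀⟩ : ∃ x₀, f x₀ ≠ 0 := by
    by_contra! h
    exact hf (LinearMap.ext h)
  have hx₀' : x₀ ≠ 0 := fun h => hx₀ (by rw [h, map_zero])
  have hc' : (‖f x₀‖ : ℂ) ^ 2 = c * (‖x₀‖ : ℂ) ^ 2 := by
    have := hc x₀ x₀
    rwa [inner_self_eq_norm_sq_to_K, inner_self_eq_norm_sq_to_K] at this
  refine ⟨((‖x₀‖ / ‖f x₀‖ : ℝ) : ℂ), by simp [hx₀, hx₀'], fun x y => ?_⟩
  have h1 : (‖x₀‖ : ℂ) ≠ 0 := by exact_mod_cast norm_ne_zero_iff.mpr hx₀'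
  have h2 : (‖f x₀‖ : ℂ) ≠ 0 := by exact_mod_cast norm_ne_zero_iff.mpr hx₀
  simp only [LinearMap.smul_apply, inner_smul_left, inner_smul_right, hc, Complex.conj_ofReal]
  push_cast
  field_simp
  rw [hc']
  ring

def Intertwines (F : Set (Module.End ℂ E)) {W W' : Submodule ℂ E} (hW : W.IsInvariantUnder F)
    (f : W → W') : Prop :=
  ∀ a (ha : a ∈ F) (x : W), (f ⟨a x, hW.apply_mem ha x.2⟩ : E) = a (f x)

namespace Intertwines

variable {F : Set (Module.End ℂ E)} {W W' W'' : Submodule ℂ E} {hW : W.IsInvariantUnder F}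

theorem id : Intertwines F hW id := fun _ _ _ => rfl

theorem comp {hW' : W'.IsInvariantUnder F} {f : W → W'} {g : W' → W''} (hf : Intertwines F hW f)
    (hg : Intertwines F hW' g) : Intertwines F hW (g ∘ f) := by
  intro a ha x
  have hfx : f ⟨a x, _⟩ = ⟨a (f x), hW'.apply_mem ha (f x).2⟩ := Subtype.ext (hf a ha x)
  simp only [Function.comp_apply, hfx]
  exact hg a ha (f x)

theorem sub {f g : W →ₗ[ℂ] W'} (hf : Intertwines F hW f) (hg : Intertwines F hW g) :
    Intertwines F hW ⇑(f - g) := by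
  intro a ha x
  simp only [LinearMap.sub_apply, AddSubgroupClass.coe_sub, hf a ha, hg a ha, map_sub]

theorem smul {f : W →ₗ[ℂ] W'} (hf : Intertwines F hW f) (c : ℂ) : Intertwines F hW ⇑(c • f) := by
  intro a ha x
  simp only [LinearMap.smul_apply, Submodule.coe_smul, hf a ha, map_smul]

theorem symm (hW' : W'.IsInvariantUnder F) {T : W ≃ₗᵢ[ℂ] W'} (hT : Intertwines F hW T) :
    Intertwines F hW' T.symm := by
  intro a ha y
  have h : T ⟨a (T.symm y), _⟩ = ⟨a y, hW'.apply_mem ha y.2⟩ :=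
    Subtype.ext (by rw [hT a ha, T.apply_symm_apply])
  rw [← h, T.symm_apply_apply]

theorem eq_zero_or_bijective (hW : W.IsMinimalInvariantUnder F)
    (hW' : W'.IsMinimalInvariantUnder F) {f : W →ₗ[ℂ] W'}
    (hf : Intertwines F hW.isInvariantUnder f) : f = 0 ∨ Function.Bijective f := by
  have hker : ((LinearMap.ker f).map W.subtype).IsInvariantUnder F := by
    rintro a ha _ ⟨x, hx, rfl⟩
    refine ⟨⟨a x, hW.isInvariantUnder.apply_mem ha x.2⟩, ?_, rfl⟩
    rw [SetLike.mem_coe, LinearMap.mem_ker] at hx ⊢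
    exact Subtype.ext (by simp [hf a ha, hx])
  have hrange : ((LinearMap.range f).map W'.subtype).IsInvariantUnder F := by
    rintro a ha _ ⟨_, ⟨x, rfl⟩, rfl⟩
    exact ⟨_, ⟨_, rfl⟩, hf a ha x⟩
  rcases hW.eq_bot_or_eq_top _ hker with hker | hker
  · rcases hW'.eq_bot_or_eq_top _ hrange with hrange | hrange
    · exact .inl (LinearMap.range_eq_bot.mp hrange)
    · exact .inr ⟨LinearMap.ker_eq_bot.mp hker, LinearMap.range_eq_top.mp hrange⟩
  · exact .inl (LinearMap.ker_eq_top.mp hker)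

variable [FiniteDimensional ℂ E]

theorem exists_eq_smul_id (hW : W.IsMinimalInvariantUnder F) {f : W →ₗ[ℂ] W}
    (hf : Intertwines F hW.isInvariantUnder f) : ∃ c : ℂ, f = c • LinearMap.id := by
  have : Nontrivial W := nontrivial_iff_ne_bot.mpr hW.ne_bot
  obtain ⟨c, hc⟩ := Module.End.exists_eigenvalue f
  obtain ⟨v, hv⟩ := hc.exists_hasEigenvector
  refine ⟨c, sub_eq_zero.mp ((eq_zero_or_bijective hW hW (hf.sub (id.smul c))).resolve_right
    fun hbij => hv.2 (hbij.1 ?_))⟩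
  simp [hv.apply_eq_smul]

theorem adjoint (hF : ∀ a ∈ F, a.IsSymmetric) (hW' : W'.IsInvariantUnder F) {f : W →ₗ[ℂ] W'}
    (hf : Intertwines F hW f) : Intertwines F hW' (LinearMap.adjoint f) := by
  intro a ha y
  suffices LinearMap.adjoint f ⟨a y, _⟩ =
      ⟨a (LinearMap.adjoint f y), hW.apply_mem ha (LinearMap.adjoint f y).2⟩ by
    rw [this]
  refine ext_inner_right ℂ fun x => ?_
  rw [LinearMap.adjoint_inner_left, coe_inner, hF a ha, ← hf a ha, ← coe_inner,
    ← LinearMap.adjoint_inner_left, coe_inner, coe_inner]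
  exact (hF a ha _ _).symm

theorem exists_linearIsometryEquiv (hF : ∀ a ∈ F, a.IsSymmetric)
    (hW : W.IsMinimalInvariantUnder F) (hW' : W'.IsMinimalInvariantUnder F) {f : W →ₗ[ℂ] W'}
    (hf : Intertwines F hW.isInvariantUnder f) (hf0 : f ≠ 0) :
    ∃ T : W ≃ₗᵢ[ℂ] W', Intertwines F hW.isInvariantUnder T := by
  obtain ⟨c, hc⟩ := exists_eq_smul_id hW (f := LinearMap.adjoint f ∘ₗ f)
    (hf.comp (hf.adjoint hF hW'.isInvariantUnder))
  obtain ⟨r, hr, hr'⟩ := LinearMap.exists_smul_inner_map_map hf0 (c := c) fun x y => by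
    rw [← LinearMap.adjoint_inner_right, ← LinearMap.comp_apply, hc]
    simp [inner_smul_right]
  have hbij := (eq_zero_or_bijective hW hW' (hf.smul r)).resolve_left (smul_ne_zero hr hf0)
  exact ⟨(LinearEquiv.ofBijective _ hbij).isometryOfInner hr', hf.smul r⟩

end Intertwines

def isotypicSetoid {F : Set (Module.End ℂ E)} {ι : Type*} {W : ι → Submodule ℂ E}
    (hW : ∀ i, (W i).IsInvariantUnder F) : Setoid ι where
  r i j := ∃ T : W i ≃ₗᵢ[ℂ] W j, Intertwines F (hW i) T
  iseqv :=
    { refl _ := ⟨.refl ℂ _, Intertwines.id⟩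
      symm := fun ⟨T, hT⟩ => ⟨T.symm, hT.symm (hW _)⟩
      trans := fun ⟨T, hT⟩ ⟨T', hT'⟩ => ⟨T.trans T', hT.comp hT'⟩ }

/-- The class `β` is enumerated by `Fin (m β + 1)`, so that `⟨β, 0⟩` is a representative. -/
theorem Setoid.exists_sigma_fin_equiv {ι : Type*} [Finite ι] (s : Setoid ι) :
    ∃ (n : ℕ) (m : Fin n → ℕ) (σ : (Σ β : Fin n, Fin (m β + 1)) ≃ ι),
      ∀ p q, s.r (σ p) (σ q) ↔ p.1 = q.1 := by
  classical
  have := Fintype.ofFinite ι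
  let f : ι → Fin (Fintype.card (Quotient s)) := Fintype.equivFin _ ∘ Quotient.mk s
  have hf : f.Surjective := (Fintype.equivFin _).surjective.comp Quotient.mk_surjective
  choose m hm using fun β => Nat.exists_eq_add_one.mpr (Fintype.card_pos_iff.mpr
    (let ⟨x, hx⟩ := hf β; ⟨(⟨x, hx⟩ : {x // f x = β})⟩))
  refine ⟨_, m, (Equiv.sigmaCongrRight fun β => (Fintype.equivFinOfCardEq (hm β)).symm).trans
    (Equiv.sigmaFiberEquiv f), fun p q => ?_⟩
  have hrel : ∀ x y, s x y ↔ f x = f y := fun x y => by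
    simp [f, Quotient.eq]
  simp only [Equiv.trans_apply, Equiv.sigmaCongrRight_apply, Equiv.sigmaFiberEquiv_apply]
  rw [hrel, ((Fintype.equivFinOfCardEq (hm p.1)).symm p.2).2,
    ((Fintype.equivFinOfCardEq (hm q.1)).symm q.2).2]

section Commutant

variable [FiniteDimensional ℂ E] {F : Set (Module.End ℂ E)} {g : Module.End ℂ E}
  {W₀ W₁ W₂ : Submodule ℂ E}

theorem intertwines_orthogonalProjectionOnto_comp (hF : ∀ a ∈ F, a.IsSymmetric)
    (hg : ∀ a ∈ F, Commute a g) (hW₁ : W₁.IsInvariantUnder F) (hW₂ : W₂.IsInvariantUnder F) :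
    Intertwines F hW₁ (W₂.orthogonalProjectionOnto.toLinearMap ∘ₗ g ∘ₗ W₁.subtype) := by
  intro a ha x
  simp only [LinearMap.coe_comp, Function.comp_apply, ContinuousLinearMap.coe_coe,
    subtype_apply, ← starProjection_apply]
  rw [← hW₂.starProjection_apply_comm hF ha, ← Module.End.mul_apply, ← (hg a ha).eq,
    Module.End.mul_apply]

theorem inner_apply_eq_zero_of_not_rel (hF : ∀ a ∈ F, a.IsSymmetric)
    (hg : ∀ a ∈ F, Commute a g) (hW₁ : W₁.IsMinimalInvariantUnder F)
    (hW₂ : W₂.IsMinimalInvariantUnder F)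
    (hrel : ¬ ∃ T : W₁ ≃ₗᵢ[ℂ] W₂, Intertwines F hW₁.isInvariantUnder T) {x y : E}
    (hx : x ∈ W₂) (hy : y ∈ W₁) : ⟪x, g y⟫_ℂ = 0 := by
  have hΦ := intertwines_orthogonalProjectionOnto_comp hF hg hW₁.isInvariantUnder
    hW₂.isInvariantUnder
  have h0 : W₂.orthogonalProjectionOnto.toLinearMap ∘ₗ g ∘ₗ W₁.subtype = 0 := by
    by_contra h
    exact hrel (Intertwines.exists_linearIsometryEquiv hF hW₁ hW₂ hΦ h)
  simpa using congr(⟪(⟨x, hx⟩ : W₂), $h0 ⟨y, hy⟩⟫_ℂ)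

theorem exists_inner_apply_eq_mul_inner (hF : ∀ a ∈ F, a.IsSymmetric)
    (hg : ∀ a ∈ F, Commute a g) (hW₀ : W₀.IsMinimalInvariantUnder F)
    (hW₁ : W₁.IsInvariantUnder F) (hW₂ : W₂.IsInvariantUnder F) {T₁ : W₀ ≃ₗᵢ[ℂ] W₁}
    {T₂ : W₀ ≃ₗᵢ[ℂ] W₂} (hT₁ : Intertwines F hW₀.isInvariantUnder T₁)
    (hT₂ : Intertwines F hW₀.isInvariantUnder T₂) :
    ∃ c : ℂ, ∀ x y : W₀, ⟪(T₂ x : E), g (T₁ y)⟫_ℂ = c * ⟪x, y⟫_ℂ := by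
  set Φ := W₂.orthogonalProjectionOnto.toLinearMap ∘ₗ g ∘ₗ W₁.subtype
  obtain ⟨c, hc⟩ := Intertwines.exists_eq_smul_id hW₀
    (f := T₂.symm.toLinearEquiv.toLinearMap ∘ₗ Φ ∘ₗ T₁.toLinearEquiv.toLinearMap)
    ((hT₁.comp (intertwines_orthogonalProjectionOnto_comp hF hg hW₁ hW₂)).comp (hT₂.symm hW₂))
  refine ⟨c, fun x y => ?_⟩
  calc ⟪(T₂ x : E), g (T₁ y)⟫_ℂ = ⟪T₂ x, Φ (T₁ y)⟫_ℂ :=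
        (inner_orthogonalProjectionOnto_eq_of_mem_left _ _).symm
    _ = ⟪x, T₂.symm (Φ (T₁ y))⟫_ℂ := by rw [← T₂.inner_map_map, T₂.apply_symm_apply]
    _ = c * ⟪x, y⟫_ℂ := by
      rw [show T₂.symm (Φ (T₁ y)) = c • y from LinearMap.congr_fun hc y, inner_smul_right]

end Commutant

theorem exists_orthonormalBasis_sigma_apply_eq [FiniteDimensional ℂ E] {ι : Type*} [Fintype ι]
    {W : ι → Submodule ℂ E} (horth : Pairwise fun i j => W i ⟂ W j) (hsup : ⨆ i, W i = ⊤)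
    {α : ι → Type*} [∀ i, Fintype (α i)] (v : ∀ i, OrthonormalBasis (α i) ℂ (W i)) :
    ∃ b : OrthonormalBasis (Σ i, α i) ℂ E, ∀ a, b a = v a.1 a.2 := by
  classical
  have hW := orthogonalFamily_iff_pairwise.mpr horth
  have hint : DirectSum.IsInternal W := by
    rw [hW.isInternal_iff, hsup, top_orthogonal_eq_bot]
  exact ⟨hint.collectedOrthonormalBasis hW v,
    fun a => by simp [DirectSum.IsInternal.collectedOrthonormalBasis]⟩

section IsotypicBlocks

open LinearMap

variable [FiniteDimensional ℂ E] {F : Set (Module.End ℂ E)} {n : ℕ} {m dl : Fin n → ℕ}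
  {W : (Σ β : Fin n, Fin (m β + 1)) → Submodule ℂ E} {T : ∀ p, W ⟨p.1, 0⟩ ≃ₗᵢ[ℂ] W p}
  {u : ∀ β, OrthonormalBasis (Fin (dl β)) ℂ (W ⟨β, 0⟩)}
  {b : OrthonormalBasis (Σ β, Fin (dl β) × Fin (m β + 1)) ℂ E}

theorem toMatrixOrthonormal_eq_blockDiagonal'_kronecker_one
    (hW : ∀ p, (W p).IsInvariantUnder F) (horth : Pairwise fun p q => W p ⟂ W q)
    (hT : ∀ p, Intertwines F (hW ⟨p.1, 0⟩) (T p))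
    (hb : ∀ β i j, b ⟨β, (i, j)⟩ = T ⟨β, j⟩ (u β i)) {a : Module.End ℂ E} (ha : a ∈ F) :
    toMatrixOrthonormal b a =
      blockDiagonal' fun β => of (fun i i' => ⟪(u β i : E), a (u β i')⟫_ℂ) ⊗ₖ 1 := by
  ext ⟨β, i, j⟩ ⟨β', i', j'⟩
  rw [toMatrixOrthonormal_apply_apply, hb, hb]
  by_cases hβ : β = β'
  · subst hβ
    rw [blockDiagonal'_apply_eq, kroneckerMap_apply, one_apply]
    by_cases hj : j = j'
    · subst hj
      rw [if_pos rfl, mul_one, ← hT _ a ha, ← coe_inner, LinearIsometryEquiv.inner_map_map,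
        coe_inner]
      rfl
    · rw [if_neg hj, mul_zero]
      exact (horth (by simpa using hj)).inner_eq (T _ _).2 ((hW _).apply_mem ha (T _ _).2)
  · rw [blockDiagonal'_apply_ne _ _ _ hβ]
    exact (horth (by simp [hβ])).inner_eq (T _ _).2 ((hW _).apply_mem ha (T _ _).2)

theorem exists_toMatrixOrthonormal_eq_blockDiagonal'_one_kronecker
    (hF : ∀ a ∈ F, a.IsSymmetric) (hW : ∀ p, (W p).IsMinimalInvariantUnder F)
    (hrel : ∀ p q, (isotypicSetoid fun p => (hW p).isInvariantUnder).r p q → p.1 = q.1)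
    (hT : ∀ p, Intertwines F (hW ⟨p.1, 0⟩).isInvariantUnder (T p))
    (hb : ∀ β i j, b ⟨β, (i, j)⟩ = T ⟨β, j⟩ (u β i)) {g : Module.End ℂ E}
    (hg : ∀ a ∈ F, Commute a g) :
    ∃ B : ∀ β, Matrix (Fin (m β + 1)) (Fin (m β + 1)) ℂ,
      toMatrixOrthonormal b g = blockDiagonal' fun β => 1 ⊗ₖ B β := by
  classical
  choose B hB using fun β (j j' : Fin (m β + 1)) => exists_inner_apply_eq_mul_inner hF hg
    (hW ⟨β, 0⟩) (hW ⟨β, j'⟩).isInvariantUnder (hW ⟨β, j⟩).isInvariantUnder (hT ⟨β, j'⟩)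
    (hT ⟨β, j⟩)
  refine ⟨fun β => of (B β), ?_⟩
  ext ⟨β, i, j⟩ ⟨β', i', j'⟩
  rw [toMatrixOrthonormal_apply_apply, hb, hb]
  by_cases hβ : β = β'
  · subst hβ
    rw [blockDiagonal'_apply_eq, hB, (u β).inner_eq_ite]
    simp [one_apply, mul_comm]
  · rw [blockDiagonal'_apply_ne _ _ _ hβ]
    exact inner_apply_eq_zero_of_not_rel hF hg (hW _) (hW _) (fun h => hβ (hrel _ _ h).symm)
      (T _ _).2 (T _ _).2

end IsotypicBlocks

open LinearMap in
theorem exists_orthonormalBasis_toMatrixOrthonormal_eq_blockDiagonal' [FiniteDimensional ℂ E]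
    {F F' : Set (Module.End ℂ E)} (hF : ∀ a ∈ F, a.IsSymmetric)
    (hcomm : ∀ a ∈ F, ∀ g ∈ F', Commute a g) :
    ∃ (n : ℕ) (dl dr : Fin n → ℕ)
      (b : OrthonormalBasis (Σ β : Fin n, Fin (dl β) × Fin (dr β)) ℂ E),
      (∀ a ∈ F, ∃ A : ∀ β, Matrix (Fin (dl β)) (Fin (dl β)) ℂ,
        toMatrixOrthonormal b a = blockDiagonal' fun β => A β ⊗ₖ 1) ∧
      (∀ g ∈ F', ∃ B : ∀ β, Matrix (Fin (dr β)) (Fin (dr β)) ℂ,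
        toMatrixOrthonormal b g = blockDiagonal' fun β => 1 ⊗ₖ B β) := by
  classical
  obtain ⟨s, hmin, horth, hsup⟩ := isInvariantUnder_top.exists_orthogonal_minimal_decomposition hF
  obtain ⟨n, m, σ, hσ⟩ :=
    (isotypicSetoid fun W : s => (hmin W W.2).isInvariantUnder).exists_sigma_fin_equiv
  let W p : Submodule ℂ E := σ p
  have hW p : (W p).IsMinimalInvariantUnder F := hmin _ (σ p).2
  have horth' : Pairwise fun p q => W p ⟂ W q := fun p q hpq =>
    horth (σ p).2 (σ q).2 (Subtype.val_injective.ne (σ.injective.ne hpq))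
  have hsup' : ⨆ p, W p = ⊤ := by
    rw [← hsup, Finset.sup_id_eq_sSup, sSup_eq_iSup']
    exact σ.iSup_comp
  choose T hT using fun p : Σ β, Fin (m β + 1) => (hσ ⟨p.1, 0⟩ p).mpr rfl
  let u β := stdOrthonormalBasis ℂ (W ⟨β, 0⟩)
  obtain ⟨b, hb⟩ := exists_orthonormalBasis_sigma_apply_eq horth' hsup' fun p => (u p.1).map (T p)
  let b' := b.reindex
    ((Equiv.sigmaAssoc fun β (_ : Fin (m β + 1)) => Fin (Module.finrank ℂ (W ⟨β, 0⟩))).trans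
      (Equiv.sigmaCongrRight fun β => (Equiv.sigmaEquivProd _ _).trans (Equiv.prodComm _ _)))
  have hb' β i j : b' ⟨β, (i, j)⟩ = T ⟨β, j⟩ (u β i) := by
    rw [OrthonormalBasis.reindex_apply, hb]
    rfl
  exact ⟨n, _, _, b', fun a ha => ⟨_, toMatrixOrthonormal_eq_blockDiagonal'_kronecker_one
    (fun p => (hW p).isInvariantUnder) horth' hT hb' ha⟩,
    fun g hg => exists_toMatrixOrthonormal_eq_blockDiagonal'_one_kronecker hF hW
      (fun p q => (hσ p q).mp) hT hb' fun a ha => hcomm a ha g hg⟩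

end CommutantDecomposition

theorem Matrix.conjTranspose_toMatrix_mul_mul_toMatrix {d : Type*} [Fintype d] [DecidableEq d]
    (b : OrthonormalBasis d ℂ (EuclideanSpace ℂ d)) (M : Matrix d d ℂ) :
    ((EuclideanSpace.basisFun d ℂ).toBasis.toMatrix b)ᴴ * M *
        (EuclideanSpace.basisFun d ℂ).toBasis.toMatrix b =
      LinearMap.toMatrixOrthonormal b (toEuclideanLin M) := by
  ext q q'
  rw [mul_assoc, ← inner_matrix_col_col, LinearMap.toMatrixOrthonormal_apply_apply, toLpLin_apply]
  rfl

theorem Matrix.blockDiagonal'_submatrix_sigmaMk_self {ι : Type*} [DecidableEq ι] {κ : ι → Type*}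
    (D : ∀ β, Matrix (κ β) (κ β) ℂ) (β : ι) :
    (blockDiagonal' D).submatrix (Sigma.mk β) (Sigma.mk β) = D β := by
  ext
  simp [blockDiagonal'_apply_eq]

theorem Matrix.blockDiagonal'_submatrix_sigmaMk_of_ne {ι : Type*} [DecidableEq ι] {κ : ι → Type*}
    (D : ∀ β, Matrix (κ β) (κ β) ℂ) {β β' : ι} (h : β ≠ β') :
    (blockDiagonal' D).submatrix (Sigma.mk β) (Sigma.mk β') = 0 := by
  ext
  simp [blockDiagonal'_apply_ne _ _ _ h]

theorem stmt_1_general (dB : ℕ) (S S' : Set (Matrix (Fin dB) (Fin dB) ℂ))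
    (hS : ∀ M ∈ S, M.IsHermitian)
    (hcomm : ∀ M ∈ S, ∀ M' ∈ S', M * M' = M' * M) :
    ∃ (n : ℕ) (dl dr : Fin n → ℕ)
      (e : (Σ β : Fin n, Fin (dl β) × Fin (dr β)) ≃ Fin dB)
      (U : Matrix (Fin dB) (Fin dB) ℂ), U ∈ Matrix.unitaryGroup (Fin dB) ℂ ∧
      (∀ M ∈ S, ∃ A : ∀ β, Matrix (Fin (dl β)) (Fin (dl β)) ℂ,
        (∀ β : Fin n, (Uᴴ * M * U).submatrix (fun p => e ⟨β, p⟩) (fun p => e ⟨β, p⟩)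
            = A β ⊗ₖ (1 : Matrix (Fin (dr β)) (Fin (dr β)) ℂ)) ∧
        (∀ β β' : Fin n, β ≠ β' →
          (Uᴴ * M * U).submatrix (fun p => e ⟨β, p⟩) (fun p => e ⟨β', p⟩) = 0)) ∧
      (∀ M' ∈ S', ∃ B : ∀ β, Matrix (Fin (dr β)) (Fin (dr β)) ℂ,
        (∀ β : Fin n, (Uᴴ * M' * U).submatrix (fun p => e ⟨β, p⟩) (fun p => e ⟨β, p⟩)
            = (1 : Matrix (Fin (dl β)) (Fin (dl β)) ℂ) ⊗ₖ B β) ∧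
        (∀ β β' : Fin n, β ≠ β' →
          (Uᴴ * M' * U).submatrix (fun p => e ⟨β, p⟩) (fun p => e ⟨β', p⟩) = 0)) := by
  obtain ⟨n, dl, dr, b, hA, hB⟩ := exists_orthonormalBasis_toMatrixOrthonormal_eq_blockDiagonal'
    (F := toEuclideanLin '' S) (F' := toEuclideanLin '' S')
    (by rintro _ ⟨M, hM, rfl⟩; exact isSymmetric_toEuclideanLin_iff.mpr (hS M hM))
    (by rintro _ ⟨M, hM, rfl⟩ _ ⟨M', hM', rfl⟩; exact Commute.map (hcomm M hM M' hM') (toLpLinAlgEquiv 2))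
  let e : (Σ β, Fin (dl β) × Fin (dr β)) ≃ Fin dB := Fintype.equivFinOfCardEq <| by
    rw [← Module.finrank_eq_card_basis b.toBasis, finrank_euclideanSpace_fin]
  let U := (EuclideanSpace.basisFun (Fin dB) ℂ).toBasis.toMatrix (b.reindex e)
  have hblock (M : Matrix (Fin dB) (Fin dB) ℂ) (β β' : Fin n) :
      (Uᴴ * M * U).submatrix (fun p => e ⟨β, p⟩) (fun p => e ⟨β', p⟩) =
        (LinearMap.toMatrixOrthonormal b (toEuclideanLin M)).submatrix (Sigma.mk β) (Sigma.mk β') := by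
    rw [conjTranspose_toMatrix_mul_mul_toMatrix, LinearMap.toMatrixOrthonormal_reindex]
    ext
    simp
  refine ⟨n, dl, dr, e, U, (EuclideanSpace.basisFun _ ℂ).toMatrix_orthonormalBasis_mem_unitary _,
    fun M hM => ?_, fun M hM => ?_⟩
  · obtain ⟨A, hA⟩ := hA _ ⟨M, hM, rfl⟩
    exact ⟨A, fun β => by rw [hblock, hA, blockDiagonal'_submatrix_sigmaMk_self],
      fun β β' h => by rw [hblock, hA, blockDiagonal'_submatrix_sigmaMk_of_ne _ h]⟩
  · obtain ⟨B, hB⟩ := hB _ ⟨M, hM, rfl⟩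
    exact ⟨B, fun β => by rw [hblock, hB, blockDiagonal'_submatrix_sigmaMk_self],
      fun β β' h => by rw [hblock, hB, blockDiagonal'_submatrix_sigmaMk_of_ne _ h]⟩

/-- Let `S`, `S'` be sets of Hermitian operators on a finite-dimensional
Hilbert space `H_B` such that every element of `S` commutes with every element of `S'`.
Then there is a finite index set `V = Fin n`, dimensions `dl β, dr β`, and a unitary
change of basis `U` realizing `H_B ≅ ⊕_β H_{β_l} ⊗ H_{β_r}`, such that in the new basis
every `M ∈ S` is block diagonal with blocks `A_β ⊗ I_{β_r}` and every `M' ∈ S'` is block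
diagonal with blocks `I_{β_l} ⊗ B_β`. -/
theorem stmt_1 (dB : ℕ) (S S' : Set (Matrix (Fin dB) (Fin dB) ℂ))
    (hS : ∀ M ∈ S, M.IsHermitian) (hS' : ∀ M ∈ S', M.IsHermitian)
    (hcomm : ∀ M ∈ S, ∀ M' ∈ S', M * M' = M' * M) :
    ∃ (n : ℕ) (dl dr : Fin n → ℕ)
      (e : (Σ β : Fin n, Fin (dl β) × Fin (dr β)) ≃ Fin dB)
      (U : Matrix (Fin dB) (Fin dB) ℂ), U ∈ Matrix.unitaryGroup (Fin dB) ℂ ∧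
      (∀ M ∈ S, ∃ A : ∀ β, Matrix (Fin (dl β)) (Fin (dl β)) ℂ,
        (∀ β : Fin n, (Uᴴ * M * U).submatrix (fun p => e ⟨β, p⟩) (fun p => e ⟨β, p⟩)
            = A β ⊗ₖ (1 : Matrix (Fin (dr β)) (Fin (dr β)) ℂ)) ∧
        (∀ β β' : Fin n, β ≠ β' →
          (Uᴴ * M * U).submatrix (fun p => e ⟨β, p⟩) (fun p => e ⟨β', p⟩) = 0)) ∧
      (∀ M' ∈ S', ∃ B : ∀ β, Matrix (Fin (dr β)) (Fin (dr β)) ℂ,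
        (∀ β : Fin n, (Uᴴ * M' * U).submatrix (fun p => e ⟨β, p⟩) (fun p => e ⟨β, p⟩)
            = (1 : Matrix (Fin (dl β)) (Fin (dl β)) ℂ) ⊗ₖ B β) ∧
        (∀ β β' : Fin n, β ≠ β' →
          (Uᴴ * M' * U).submatrix (fun p => e ⟨β, p⟩) (fun p => e ⟨β', p⟩) = 0)) :=
  stmt_1_general dB S S' hS hcomm
end

section
/- Let G be a finite directed graph with positive integer edge weights w, and define f(N) = Σ over ordered closed walks of length N of the product of weights along the walk. If f(N) = f(N(N+1)) = f(N+1) for some sufficiently large N (specifically N at least the number of vertices times the maximum possible cycle count), then every edge lying on a closed walk of length N or N+1 has weight w(e) = 1. -/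
/-!
Pulling a closed walk of length `m` back along `ℤ/n → ℤ/m` (for `m ∣ n`) gives an injection of
closed `m`-walks into closed `n`-walks that raises weights to the power `n / m`. Since weights are
positive integers, `f(m) ≤ ∑ W(c) ^ (n / m) ≤ f(n)`, and `f(m) = f(n)` with `m < n` forces every
closed `m`-walk to have weight `1` and every closed `n`-walk to be `m`-periodic. For `m = N` and
`n = N(N+1)`, a closed `(N+1)`-walk traversed `N` times is a closed `n`-walk, hence `N`-periodic,
so each of its edges also lies on a closed `N`-walk.
-/

/-- the weighted number of ordered closed walks of length `L`:
`f(L) = Σ_{closed walks (α^1,…,α^L)} Π_j w(α^j → α^{j+1})`. -/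
def walkSum (V : Type*) [Fintype V] [DecidableEq V]
    (Edge : V → V → Prop) [DecidableRel Edge] (w : V → V → ℕ)
    (L : ℕ) [NeZero L] : ℕ :=
  ∑ c ∈ Finset.univ.filter (fun c : ZMod L → V => ∀ i, Edge (c i) (c (i + 1))),
    ∏ i : ZMod L, w (c i) (c (i + 1))

instance (N : ℕ) [NeZero N] : NeZero (N * (N + 1)) := ⟨Nat.mul_ne_zero (NeZero.ne N) (Nat.succ_ne_zero N)⟩

open Finset

namespace ZMod

variable {m n : ℕ} [NeZero m] [NeZero n]

theorem card_fiber_castHom (h : m ∣ n) (j : ZMod m) :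
    #{i : ZMod n | castHom h (ZMod m) i = j} = n / m := by
  have hfiber : ∀ j : ZMod m, #{i : ZMod n | castHom h (ZMod m) i = j} =
      #{i : ZMod n | castHom h (ZMod m) i = 0} := fun j =>
    AddMonoidHom.card_fiber_eq_of_mem_range _ (castHom_surjective h j) (castHom_surjective h 0)
  have hcard : n = m * #{i : ZMod n | castHom h (ZMod m) i = 0} := by
    have := card_eq_sum_card_fiberwise (f := castHom h (ZMod m)) (s := univ) (t := univ)
      fun _ _ => mem_univ _
    rwa [sum_congr rfl fun j _ => hfiber j, sum_const, card_univ, card_univ, ZMod.card,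
      ZMod.card, smul_eq_mul] at this
  rw [hfiber j]
  exact (Nat.div_eq_of_eq_mul_right (NeZero.pos m) hcard).symm

theorem prod_comp_castHom {M : Type*} [CommMonoid M] (h : m ∣ n) (g : ZMod m → M) :
    ∏ i : ZMod n, g (castHom h (ZMod m) i) = (∏ j, g j) ^ (n / m) := by
  rw [prod_comp, image_univ_of_surjective (castHom_surjective h), ← prod_pow]
  exact prod_congr rfl fun j _ => by rw [card_fiber_castHom h j]

end ZMod

open ZMod

section ClosedWalks

variable {V : Type*} {Edge : V → V → Prop} {w : V → V → ℕ} {m n : ℕ} {a b : V}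

variable (Edge) in
abbrev IsClosedWalk {L : ℕ} (c : ZMod L → V) : Prop :=
  ∀ i, Edge (c i) (c (i + 1))

variable (w) in
def walkWeight {L : ℕ} [NeZero L] (c : ZMod L → V) : ℕ :=
  ∏ i, w (c i) (c (i + 1))

variable (Edge) in
def closedWalks [Fintype V] [DecidableRel Edge] (L : ℕ) [NeZero L] : Finset (ZMod L → V) :=
  {c | IsClosedWalk Edge c}

@[simp]
theorem mem_closedWalks [Fintype V] [DecidableRel Edge] {L : ℕ} [NeZero L] {c : ZMod L → V} :
    c ∈ closedWalks Edge L ↔ IsClosedWalk Edge c := by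
  simp [closedWalks]

variable (Edge) in
def OnClosedWalk (L : ℕ) (a b : V) : Prop :=
  ∃ c : ZMod L → V, IsClosedWalk Edge c ∧ ∃ i, c i = a ∧ c (i + 1) = b

theorem IsClosedWalk.comp_castHom (h : m ∣ n) {c : ZMod m → V} (hc : IsClosedWalk Edge c) :
    IsClosedWalk Edge (c ∘ castHom h (ZMod m)) := fun i => by
  simpa only [Function.comp_apply, map_add, map_one] using hc (castHom h (ZMod m) i)

theorem OnClosedWalk.of_dvd (h : m ∣ n) : OnClosedWalk Edge m a b → OnClosedWalk Edge n a b := by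
  rintro ⟨c, hc, i, rfl, rfl⟩
  obtain ⟨i, rfl⟩ := castHom_surjective h i
  exact ⟨_, hc.comp_castHom h, i, rfl, by simp only [Function.comp_apply, map_add, map_one]⟩

variable [NeZero m] [NeZero n]

theorem walkWeight_comp_castHom (h : m ∣ n) (c : ZMod m → V) :
    walkWeight w (c ∘ castHom h (ZMod m)) = walkWeight w c ^ (n / m) := by
  simpa only [walkWeight, Function.comp_apply, map_add, map_one] using
    prod_comp_castHom h fun j => w (c j) (c (j + 1))

theorem one_le_walkWeight (hw : ∀ a b, Edge a b → 1 ≤ w a b) {c : ZMod m → V}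
    (hc : IsClosedWalk Edge c) : 1 ≤ walkWeight w c :=
  one_le_prod' fun i _ => hw _ _ (hc i)

variable [Fintype V] [DecidableEq V] [DecidableRel Edge]

theorem walkSum_eq_sum_walkWeight :
    walkSum V Edge w m = ∑ c ∈ closedWalks Edge m, walkWeight w c :=
  rfl

theorem walkSum_le_sum_pow_walkWeight {k : ℕ} (hk : k ≠ 0) :
    walkSum V Edge w m ≤ ∑ c ∈ closedWalks Edge m, walkWeight w c ^ k := by
  rw [walkSum_eq_sum_walkWeight]
  exact sum_le_sum fun _ _ => Nat.le_self_pow hk _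

theorem walkSum_lt_sum_pow_walkWeight (hw : ∀ a b, Edge a b → 1 ≤ w a b) {k : ℕ} (hk : 2 ≤ k)
    {c : ZMod m → V} (hc : IsClosedWalk Edge c) (hne : walkWeight w c ≠ 1) :
    walkSum V Edge w m < ∑ c ∈ closedWalks Edge m, walkWeight w c ^ k := by
  have hgt : 1 < walkWeight w c := lt_of_le_of_ne (one_le_walkWeight hw hc) (Ne.symm hne)
  rw [walkSum_eq_sum_walkWeight]
  exact sum_lt_sum (fun _ _ => Nat.le_self_pow (by omega) _)
    ⟨c, mem_closedWalks.mpr hc, lt_self_pow₀ hgt (by omega)⟩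

theorem sum_pow_walkWeight_eq_sum_image (h : m ∣ n) :
    ∑ c ∈ closedWalks Edge m, walkWeight w c ^ (n / m) =
      ∑ C ∈ (closedWalks Edge m).image (· ∘ castHom h (ZMod m)),
        walkWeight w C := by
  rw [sum_image fun _ _ _ _ hcc => (castHom_surjective h).injective_comp_right hcc]
  exact sum_congr rfl fun c _ => (walkWeight_comp_castHom h c).symm

theorem image_comp_castHom_subset (h : m ∣ n) :
    (closedWalks Edge m).image (· ∘ castHom h (ZMod m)) ⊆
      closedWalks Edge n := by
  intro C hC
  obtain ⟨c, hc, rfl⟩ := mem_image.mp hC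
  exact mem_closedWalks.mpr ((mem_closedWalks.mp hc).comp_castHom h)

theorem sum_pow_walkWeight_le_walkSum (h : m ∣ n) :
    ∑ c ∈ closedWalks Edge m, walkWeight w c ^ (n / m) ≤
      walkSum V Edge w n := by
  rw [sum_pow_walkWeight_eq_sum_image h, walkSum_eq_sum_walkWeight]
  exact sum_le_sum_of_subset (image_comp_castHom_subset h)

theorem sum_pow_walkWeight_lt_walkSum (hw : ∀ a b, Edge a b → 1 ≤ w a b) (h : m ∣ n)
    {C : ZMod n → V} (hC : IsClosedWalk Edge C)
    (hC' : ∀ c : ZMod m → V, IsClosedWalk Edge c → c ∘ castHom h (ZMod m) ≠ C) :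
    ∑ c ∈ closedWalks Edge m, walkWeight w c ^ (n / m) <
      walkSum V Edge w n := by
  rw [sum_pow_walkWeight_eq_sum_image h, walkSum_eq_sum_walkWeight]
  refine sum_lt_sum_of_subset (image_comp_castHom_subset h) (mem_closedWalks.mpr hC) ?_
    (one_le_walkWeight hw hC) fun _ _ _ => Nat.zero_le _
  simp only [mem_image, mem_closedWalks, not_exists, not_and]
  exact hC'

theorem walkWeight_eq_one_of_walkSum_eq (hw : ∀ a b, Edge a b → 1 ≤ w a b) (h : m ∣ n)
    (hmn : m < n) (heq : walkSum V Edge w m = walkSum V Edge w n) {c : ZMod m → V}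
    (hc : IsClosedWalk Edge c) : walkWeight w c = 1 := by
  by_contra hne
  obtain ⟨k, rfl⟩ := h
  have hk : 2 ≤ m * k / m := by
    rw [Nat.mul_div_cancel_left _ (NeZero.pos m)]
    exact (Nat.lt_mul_iff_one_lt_right (NeZero.pos m)).mp hmn
  exact (walkSum_lt_sum_pow_walkWeight hw hk hc hne).not_ge
    (heq ▸ sum_pow_walkWeight_le_walkSum ⟨k, rfl⟩)

theorem exists_comp_castHom_eq_of_walkSum_eq (hw : ∀ a b, Edge a b → 1 ≤ w a b) (h : m ∣ n)
    (heq : walkSum V Edge w m = walkSum V Edge w n) {C : ZMod n → V}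
    (hC : IsClosedWalk Edge C) :
    ∃ c : ZMod m → V, IsClosedWalk Edge c ∧ c ∘ castHom h (ZMod m) = C := by
  by_contra! hC'
  have hk : n / m ≠ 0 := (Nat.div_pos (Nat.le_of_dvd (NeZero.pos n) h) (NeZero.pos m)).ne'
  exact (sum_pow_walkWeight_lt_walkSum hw h hC hC').not_ge
    (heq ▸ walkSum_le_sum_pow_walkWeight hk)

theorem OnClosedWalk.of_walkSum_eq (hw : ∀ a b, Edge a b → 1 ≤ w a b) (h : m ∣ n)
    (heq : walkSum V Edge w m = walkSum V Edge w n) :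
    OnClosedWalk Edge n a b → OnClosedWalk Edge m a b := by
  rintro ⟨C, hC, i, rfl, rfl⟩
  obtain ⟨c, hc, rfl⟩ := exists_comp_castHom_eq_of_walkSum_eq hw h heq hC
  exact ⟨c, hc, castHom h (ZMod m) i, rfl, by simp only [Function.comp_apply, map_add, map_one]⟩

theorem OnClosedWalk.weight_eq_one_of_walkSum_eq (hw : ∀ a b, Edge a b → 1 ≤ w a b)
    (h : m ∣ n) (hmn : m < n) (heq : walkSum V Edge w m = walkSum V Edge w n) :
    OnClosedWalk Edge m a b → w a b = 1 := by
  rintro ⟨c, hc, i, rfl, rfl⟩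
  refine Nat.eq_one_of_dvd_one ?_
  rw [← walkWeight_eq_one_of_walkSum_eq hw h hmn heq hc]
  exact dvd_prod_of_mem _ (mem_univ i)

end ClosedWalks

theorem stmt_7_general (V : Type*) [Fintype V] [DecidableEq V]
    (Edge : V → V → Prop) [DecidableRel Edge] (w : V → V → ℕ)
    (hw : ∀ a b, Edge a b → 1 ≤ w a b)
    (N : ℕ) [NeZero N]
    (h1 : walkSum V Edge w N = walkSum V Edge w (N * (N + 1))) :
    ∀ a b : V, Edge a b →
      ((∃ c : ZMod N → V, (∀ i, Edge (c i) (c (i + 1))) ∧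
          ∃ i, c i = a ∧ c (i + 1) = b) ∨
       (∃ c : ZMod (N + 1) → V, (∀ i, Edge (c i) (c (i + 1))) ∧
          ∃ i, c i = a ∧ c (i + 1) = b)) →
      w a b = 1 := by
  have hdvd : N ∣ N * (N + 1) := dvd_mul_right N (N + 1)
  have hlt : N < N * (N + 1) := lt_mul_of_one_lt_right (NeZero.pos N) (Nat.lt_add_of_pos_left (NeZero.pos N))
  rintro a b - (hab | hab)
  · exact OnClosedWalk.weight_eq_one_of_walkSum_eq hw hdvd hlt h1 hab
  · exact OnClosedWalk.weight_eq_one_of_walkSum_eq hw hdvd hlt h1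
      ((OnClosedWalk.of_dvd (dvd_mul_left (N + 1) N) hab).of_walkSum_eq hw hdvd h1)

/-- if `f(N) = f(N(N+1)) = f(N+1)` for a sufficiently large `N`, then every
edge lying on a closed walk of length `N` or of length `N+1` has weight `1`. -/
theorem stmt_7 (V : Type*) [Fintype V] [DecidableEq V]
    (Edge : V → V → Prop) [DecidableRel Edge] (w : V → V → ℕ)
    (hw : ∀ a b, Edge a b → 1 ≤ w a b)
    (N : ℕ) [NeZero N] (hN : Fintype.card V ≤ N)
    (h1 : walkSum V Edge w N = walkSum V Edge w (N * (N + 1)))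
    (h2 : walkSum V Edge w (N + 1) = walkSum V Edge w (N * (N + 1))) :
    ∀ a b : V, Edge a b →
      ((∃ c : ZMod N → V, (∀ i, Edge (c i) (c (i + 1))) ∧
          ∃ i, c i = a ∧ c (i + 1) = b) ∨
       (∃ c : ZMod (N + 1) → V, (∀ i, Edge (c i) (c (i + 1))) ∧
          ∃ i, c i = a ∧ c (i + 1) = b)) →
      w a b = 1 :=
  stmt_7_general V Edge w hw N h1
end

section
/- Let G be a finite directed graph such that for some pair of coprime integers N, N+1 (N at least the number of vertices) every closed walk of length N(N+1) arises both as D^{N+1} for some closed walk D of length N and as E^N for some closed walk E of length N+1. Then every closed walk of length N in G is the N-fold repetition of a loop, i.e., constant. -/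
/-!
Repeating a closed walk `D` of length `N` `N + 1` times gives a closed walk of length `N(N+1)`,
which by hypothesis is also `E^N` for a closed walk `E` of length `N + 1`. So the walk
`x ↦ D (x mod N)` on `ℤ/N(N+1)` also factors through `ℤ/(N+1)`; by the Chinese remainder
theorem every residue `k` mod `N` is hit by some `x ≡ 0 mod N + 1`, whence `D k = E 0`.
-/

namespace ZMod

theorem exists_castHom_eq_and_castHom_eq {m n : ℕ} (hmn : m.Coprime n) (a : ZMod m)
    (b : ZMod n) :
    ∃ x : ZMod (m * n), castHom (dvd_mul_right m n) (ZMod m) x = a ∧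
      castHom (dvd_mul_left n m) (ZMod n) x = b := by
  refine ⟨(chineseRemainder hmn).symm (a, b), ?_⟩
  have hx := (chineseRemainder hmn).apply_symm_apply (a, b)
  rw [Prod.ext_iff] at hx
  exact ⟨(Prod.fst_zmod_cast _).symm.trans hx.1, (Prod.snd_zmod_cast _).symm.trans hx.2⟩

theorem apply_eq_of_comp_castHom_eq {α : Type*} {m n : ℕ} (hmn : m.Coprime n)
    {f : ZMod m → α} {g : ZMod n → α}
    (h : ∀ x : ZMod (m * n), f (castHom (dvd_mul_right m n) (ZMod m) x) =
      g (castHom (dvd_mul_left n m) (ZMod n) x))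
    (i j : ZMod m) : f i = f j := by
  obtain ⟨x, hxi, hx0⟩ := exists_castHom_eq_and_castHom_eq hmn i 0
  obtain ⟨y, hyj, hy0⟩ := exists_castHom_eq_and_castHom_eq hmn j 0
  calc f i = g 0 := by rw [← hxi, h, hx0]
    _ = f j := by rw [← hy0, ← h, hyj]

end ZMod

theorem stmt_11_general (V : Type*) (Edge : V → V → Prop)
    (N : ℕ)
    (h : ∀ c : ZMod (N * (N + 1)) → V, (∀ i, Edge (c i) (c (i + 1))) →
      (∃ D : ZMod N → V, (∀ i, Edge (D i) (D (i + 1))) ∧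
        ∀ i, c i = D (ZMod.castHom (dvd_mul_right N (N + 1)) (ZMod N) i)) ∧
      (∃ E : ZMod (N + 1) → V, (∀ i, Edge (E i) (E (i + 1))) ∧
        ∀ i, c i = E (ZMod.castHom (dvd_mul_left (N + 1) N) (ZMod (N + 1)) i))) :
    ∀ D : ZMod N → V, (∀ i, Edge (D i) (D (i + 1))) → ∀ i j, D i = D j := by
  intro D hD
  obtain ⟨-, E, -, hE⟩ := h (fun x => D (ZMod.castHom (dvd_mul_right N (N + 1)) (ZMod N) x))
    fun x => by simpa only [map_add, map_one] using hD _
  exact ZMod.apply_eq_of_comp_castHom_eq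
    (Nat.coprime_self_add_right.mpr (Nat.coprime_one_right N)) hE

/-- if every closed walk of length `N(N+1)` arises both as `D^{N+1}` for a
closed walk `D` of length `N` and as `E^N` for a closed walk `E` of length `N+1`
(`N` at least the number of vertices), then every closed walk of length `N` is constant,
i.e. the `N`-fold repetition of a loop. -/
theorem stmt_11 (V : Type*) [Fintype V] (Edge : V → V → Prop)
    (N : ℕ) [NeZero N] (hN : Fintype.card V ≤ N)
    (h : ∀ c : ZMod (N * (N + 1)) → V, (∀ i, Edge (c i) (c (i + 1))) →
      (∃ D : ZMod N → V, (∀ i, Edge (D i) (D (i + 1))) ∧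
        ∀ i, c i = D (ZMod.castHom (dvd_mul_right N (N + 1)) (ZMod N) i)) ∧
      (∃ E : ZMod (N + 1) → V, (∀ i, Edge (E i) (E (i + 1))) ∧
        ∀ i, c i = E (ZMod.castHom (dvd_mul_left (N + 1) N) (ZMod (N + 1)) i))) :
    ∀ D : ZMod N → V, (∀ i, Edge (D i) (D (i + 1))) → ∀ i j, D i = D j :=
  stmt_11_general V Edge N h
end

section
/- Let H = ℂ^d and fix a decomposition ℂ^d ≅ ⊕_{α∈V} H_{α_l} ⊗ H_{α_r}. For each pair (α,β) ∈ V×V let Q_{α_r,β_l} be a projection on H_{α_r} ⊗ H_{β_l}, and for j ∈ ℤ/N define the projection P_{j,j+1} on (ℂ^d)^{⊗N} acting on sites j, j+1 as Σ_{α,β} I_{α_l^j} ⊗ Q_{α_r^j, β_l^{j+1}} ⊗ I_{β_r^{j+1}} (block-diagonally with respect to the decomposition, identity on all other sites). Then ker(Σ_{j∈ℤ/N} P_{j,j+1}) = ⊕_{(α^1,...,α^N)} ⊗_{j=1}^N ker Q_{α_r^j, α_l^{j+1}}, where the direct sum is over all functions (α^1,...,α^N) ∈ V^N and indices on j are mod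 N. -/
open Matrix

variable {V : Type*} [DecidableEq V]

/-- transport along an equality of vertices, left dimensions. -/
def castL (dl : V → ℕ) {α β : V} (h : α = β) (i : Fin (dl β)) : Fin (dl α) :=
  cast (by rw [h]) i

/-- transport along an equality of vertices, right dimensions. -/
def castR (dr : V → ℕ) {α β : V} (h : α = β) (i : Fin (dr β)) : Fin (dr α) :=
  cast (by rw [h]) i

/-- the single-site index set, realizing `ℂ^d ≅ ⊕_{α ∈ V} H_{α_l} ⊗ H_{α_r}`
where `dim H_{α_l} = dl α` and `dim H_{α_r} = dr α`. -/
def Site (V : Type*) (dl dr : V → ℕ) : Type _ := Σ α : V, Fin (dl α) × Fin (dr α)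

variable [Fintype V]

instance (dl dr : V → ℕ) : Fintype (Site V dl dr) := by unfold Site; infer_instance
instance (dl dr : V → ℕ) : DecidableEq (Site V dl dr) := by unfold Site; infer_instance

/-- the local term `P_{j,j+1}` of the block-diagonal Hamiltonian on the periodic chain
of `N` qudits: it preserves the decomposition of each site, acts as the identity on all
sites other than `j, j+1` and on the factors `H_{α_l}` of site `j` and `H_{β_r}` of site
`j+1`, and acts as `Q α β` on `H_{α_r} ⊗ H_{β_l}` (for the blocks `α` at `j`, `β` at
`j+1`). -/
noncomputable def Pblock (V : Type*) [Fintype V] [DecidableEq V] (dl dr : V → ℕ)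
    (Q : ∀ α β : V, Matrix (Fin (dr α) × Fin (dl β)) (Fin (dr α) × Fin (dl β)) ℂ)
    (N : ℕ) [NeZero N] (j : ZMod N) :
    Matrix (ZMod N → Site V dl dr) (ZMod N → Site V dl dr) ℂ :=
  Matrix.of fun x y =>
    (if ∀ i, i ≠ j → i ≠ j + 1 → x i = y i then (1 : ℂ) else 0) *
    (if h : (x j).1 = (y j).1 ∧ (x (j + 1)).1 = (y (j + 1)).1 then
      (if (x j).2.1 = castL dl h.1 (y j).2.1 ∧
          (x (j + 1)).2.2 = castR dr h.2 (y (j + 1)).2.2 then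
        Q (x j).1 (x (j + 1)).1 ((x j).2.2, (x (j + 1)).2.1)
          (castR dr h.1 (y j).2.2, castL dl h.2 (y (j + 1)).2.1)
      else 0)
    else 0)

/-- the block-diagonal Hamiltonian `H_N = Σ_{j ∈ ℤ/N} P_{j,j+1}`. -/
noncomputable def Hblock (V : Type*) [Fintype V] [DecidableEq V] (dl dr : V → ℕ)
    (Q : ∀ α β : V, Matrix (Fin (dr α) × Fin (dl β)) (Fin (dr α) × Fin (dl β)) ℂ)
    (N : ℕ) [NeZero N] :
    Matrix (ZMod N → Site V dl dr) (ZMod N → Site V dl dr) ℂ :=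
  ∑ j, Pblock V dl dr Q N j

/-- the elementary product vector `⊗_j f_j` lying in the summand of `((ℂ^d)^{⊗N}`
labelled by the block configuration `a : ℤ/N → V`, where
`f j ∈ H_{(a j)_r} ⊗ H_{(a (j+1))_l}`. -/
noncomputable def prodVec (V : Type*) [DecidableEq V] (dl dr : V → ℕ) (N : ℕ) [NeZero N]
    (a : ZMod N → V)
    (f : ∀ j : ZMod N, Fin (dr (a j)) × Fin (dl (a (j + 1))) → ℂ) :
    (ZMod N → Site V dl dr) → ℂ :=
  fun x =>
    if h : ∀ j, (x j).1 = a j then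
      ∏ j, f j (castR dr (h j).symm (x j).2.2, castL dl (h (j + 1)).symm (x (j + 1)).2.1)
    else 0

/-!
Fix the block label `a : ℤ/N → V` of every site. Regrouping the site indices into bond indices
(the right index of site `j` with the left index of site `j + 1`) identifies this sector with the
tensor product `⊗_j (H_{(a j)_r} ⊗ H_{(a (j+1))_l})`, on which `P_{j,j+1}` acts as `Q` on the
`j`-th factor alone (here `N ≥ 2` keeps sites `j` and `j + 1` apart), and `H_N` preserves every
sector. Each such operator is an orthogonal projection, hence positive semidefinite, so a vector
is killed by the sum exactly when it is killed by every term. A vector killed by every `Q_j` on its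
own factor is fixed by `⊗_j (1 - Q_j)`, and as the columns of `1 - Q_j` lie in `ker Q_j`, this
writes it as a combination of product vectors of kernel vectors.
-/

open scoped ComplexOrder

theorem Matrix.PosSemidef.mulVec_eq_zero_of_sum {𝕜 n κ : Type*} [RCLike 𝕜] [Fintype n]
    [Fintype κ] {A : κ → Matrix n n 𝕜} (hA : ∀ k, (A k).PosSemidef) {x : n → 𝕜}
    (hx : (∑ k, A k) *ᵥ x = 0) (k : κ) : A k *ᵥ x = 0 := by
  have hsum : ∑ k, star x ⬝ᵥ A k *ᵥ x = 0 := by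
    rw [← dotProduct_sum, ← Matrix.sum_mulVec, hx, dotProduct_zero]
  rw [← (hA k).dotProduct_mulVec_zero_iff]
  exact (Finset.sum_eq_zero_iff_of_nonneg fun k _ => (hA k).dotProduct_mulVec_nonneg x).mp hsum k
    (Finset.mem_univ k)

section OnFactor

variable {ι : Type*} [DecidableEq ι] {B : ι → Type*}

theorem forall_ne_update_eq_iff {i : ι} {b b' : ∀ j, B j} {c : B i} :
    (∀ k ≠ i, Function.update b i c k = b' k) ↔ ∀ k ≠ i, b k = b' k :=
  forall₂_congr fun _ hk => by rw [Function.update_of_ne hk]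

variable [Fintype ι] [∀ i, DecidableEq (B i)]

def onFactor {R : Type*} [Zero R] (i : ι) (M : Matrix (B i) (B i) R) :
    Matrix (∀ j, B j) (∀ j, B j) R :=
  of fun b b' => if ∀ k ≠ i, b k = b' k then M (b i) (b' i) else 0

theorem conjTranspose_onFactor {R : Type*} [AddMonoid R] [StarAddMonoid R] (i : ι)
    (M : Matrix (B i) (B i) R) :
    (onFactor i M)ᴴ = onFactor i Mᴴ := by
  ext b b'
  simp only [conjTranspose_apply, onFactor, of_apply]
  by_cases h : ∀ k ≠ i, b k = b' k
  · rw [if_pos h, if_pos fun k hk => (h k hk).symm]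
  · rw [if_neg h, if_neg fun h' => h fun k hk => (h' k hk).symm, star_zero]

variable [∀ i, Fintype (B i)]

section CommSemiring

variable {R : Type*} [CommSemiring R]

theorem onFactor_mulVec_apply (i : ι) (M : Matrix (B i) (B i) R) (g : (∀ j, B j) → R)
    (b : ∀ j, B j) :
    (onFactor i M *ᵥ g) b = ∑ c, M (b i) c * g (Function.update b i c) := by
  refine (Fintype.sum_of_injective _ (Function.update_injective b i) _ _ ?_ ?_).symm
  · rintro b' hb'
    have hne : ¬ ∀ k ≠ i, b k = b' k := fun h =>
      hb' ⟨b' i, Function.update_eq_iff.mpr ⟨rfl, fun k hk => h k hk⟩⟩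
    simp [onFactor, hne]
  · intro c
    have hagree : ∀ k ≠ i, b k = Function.update b i c k := fun k hk =>
      (Function.update_of_ne hk _ _).symm
    simp only [onFactor, of_apply, if_pos hagree, Function.update_self]

theorem onFactor_mul (i : ι) (M M' : Matrix (B i) (B i) R) :
    onFactor i M * onFactor i M' = onFactor i (M * M') := by
  ext b b'
  change (onFactor i M *ᵥ fun x => onFactor i M' x b') b = _
  rw [onFactor_mulVec_apply]
  simp only [onFactor, of_apply, Function.update_self, forall_ne_update_eq_iff, mul_apply]
  split_ifs <;> simp

theorem onFactor_mulVec_prod {i : ι} {M : Matrix (B i) (B i) R} {f : ∀ j, B j → R}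
    (hf : M *ᵥ f i = 0) : onFactor i M *ᵥ (fun b => ∏ j, f j (b j)) = 0 := by
  funext b
  simp_rw [onFactor_mulVec_apply, Function.apply_update f,
    Finset.prod_update_of_mem (Finset.mem_univ i), ← mul_assoc, ← Finset.sum_mul]
  have hfi : ∑ c, M (b i) c * f i c = 0 := congrFun hf (b i)
  rw [hfi, zero_mul, Pi.zero_apply]

theorem sum_apply_mul_eq_zero {i : ι} {M : Matrix (B i) (B i) R} {g : (∀ j, B j) → R}
    (hg : onFactor i M *ᵥ g = 0) (x : B i) : ∑ b, M x (b i) * g b = 0 := by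
  let e := (Equiv.piSplitAt i B).symm
  have he_update : ∀ c c' r, Function.update (e (c, r)) i c' = e (c', r) := by
    intro c c' r
    funext k
    by_cases hk : k = i
    · subst hk; simp [e]
    · simp [e, hk]
  rw [← e.sum_comp, Fintype.sum_prod_type, Finset.sum_comm]
  refine Finset.sum_eq_zero fun r _ => ?_
  have hslice := congrFun hg (e (x, r))
  rw [onFactor_mulVec_apply] at hslice
  simpa [he_update, e] using hslice

theorem sum_mul_apply_mul_eq_zero {i : ι} {M : Matrix (B i) (B i) R} {g : (∀ j, B j) → R}
    (hg : onFactor i M *ᵥ g = 0) {F : (∀ j, B j) → R}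
    (hF : ∀ b c, F (Function.update b i c) = F b) (x : B i) :
    ∑ b, F b * M x (b i) * g b = 0 := by
  have hFg : onFactor i M *ᵥ (fun b => F b * g b) = 0 := by
    funext b
    have hgb := congrFun hg b
    simp only [onFactor_mulVec_apply, Pi.zero_apply, hF] at hgb ⊢
    simp_rw [mul_left_comm _ (F b), ← Finset.mul_sum, hgb, mul_zero]
  simpa only [mul_assoc, mul_left_comm (F _)] using sum_apply_mul_eq_zero hFg x

end CommSemiring

section CommRing

variable {R : Type*} [CommRing R]

-- Expand `∏ j, (1 - Q j)` over subsets of factors: a term containing some `Q i` vanishes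
-- after summing over the `i`-th coordinate, since `Q i` kills `g` along that coordinate.
theorem eq_sum_prod_one_sub_mul {Q : ∀ j, Matrix (B j) (B j) R} {g : (∀ j, B j) → R}
    (hg : ∀ j, onFactor j (Q j) *ᵥ g = 0) (b : ∀ j, B j) :
    g b = ∑ b', (∏ j, (1 - Q j) (b j) (b' j)) * g b' := by
  simp_rw [Matrix.sub_apply, sub_eq_add_neg, Finset.prod_add, Finset.sum_mul]
  rw [Finset.sum_comm, Finset.sum_eq_single Finset.univ]
  · simp [one_apply, Finset.prod_boole, ← funext_iff]
  · intro t _ ht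
    obtain ⟨i, hi⟩ : ∃ i, i ∉ t := by
      by_contra! h
      exact ht (Finset.eq_univ_iff_forall.mpr h)
    have hi' : i ∈ Finset.univ \ t := by simpa using hi
    set F : (∀ j, B j) → R := fun b' =>
      (∏ j ∈ t, (1 : Matrix (B j) (B j) R) (b j) (b' j)) *
        ∏ j ∈ (Finset.univ \ t).erase i, -Q j (b j) (b' j)
    have hF : ∀ b' c, F (Function.update b' i c) = F b' := by
      intro b' c
      simp only [F]
      congr 1 <;> refine Finset.prod_congr rfl fun j hj => ?_
      · rw [Function.update_of_ne (ne_of_mem_of_not_mem hj hi)]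
      · rw [Function.update_of_ne (Finset.ne_of_mem_erase hj)]
    calc _ = -∑ b', F b' * Q i (b i) (b' i) * g b' := by
          rw [← Finset.sum_neg_distrib]
          refine Finset.sum_congr rfl fun b' _ => ?_
          rw [← Finset.mul_prod_erase _ _ hi']
          ring
      _ = 0 := by rw [sum_mul_apply_mul_eq_zero (hg i) hF, neg_zero]
  · simp

end CommRing

section RCLike

variable {𝕜 : Type*} [RCLike 𝕜]

theorem posSemidef_onFactor {i : ι} {M : Matrix (B i) (B i) 𝕜} (hM : M.IsHermitian)
    (hMM : M * M = M) : (onFactor i M).PosSemidef := by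
  have h := posSemidef_conjTranspose_mul_self (onFactor i M)
  rwa [conjTranspose_onFactor, hM.eq, onFactor_mul, hMM] at h

theorem ker_sum_onFactor {Q : ∀ i, Matrix (B i) (B i) 𝕜} (hQ : ∀ i, (Q i).IsHermitian)
    (hQQ : ∀ i, Q i * Q i = Q i) :
    LinearMap.ker (∑ i, onFactor i (Q i)).mulVecLin =
      Submodule.span 𝕜 {v | ∃ f : ∀ i, B i → 𝕜, (∀ i, Q i *ᵥ f i = 0) ∧
        v = fun b => ∏ i, f i (b i)} := by
  apply le_antisymm
  · intro g hg
    have hg' : ∀ i, onFactor i (Q i) *ᵥ g = 0 :=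
      PosSemidef.mulVec_eq_zero_of_sum (fun i => posSemidef_onFactor (hQ i) (hQQ i)) hg
    have hrepr : g = ∑ b', g b' • fun b => ∏ j, (1 - Q j) (b j) (b' j) := by
      funext b
      rw [eq_sum_prod_one_sub_mul hg' b, Finset.sum_apply]
      simp only [Pi.smul_apply, smul_eq_mul, mul_comm]
    rw [hrepr]
    refine Submodule.sum_mem _ fun b' _ => Submodule.smul_mem _ _ (Submodule.subset_span
      ⟨fun j x => (1 - Q j) x (b' j), fun j => ?_, rfl⟩)
    funext x
    change (Q j * (1 - Q j)) x (b' j) = 0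
    rw [mul_sub, mul_one, hQQ, sub_self, Matrix.zero_apply]
  · rw [Submodule.span_le]
    rintro _ ⟨f, hf, rfl⟩
    simp [onFactor_mulVec_prod (hf _)]

end RCLike

end OnFactor

section Chain

variable {V : Type*} (dl dr : V → ℕ) {N : ℕ}

-- Bond `j` joins the right factor of site `j` to the left factor of site `j + 1`: the factor
-- on which `Q (a j) (a (j + 1))` acts.
abbrev Bond (a : ZMod N → V) (j : ZMod N) : Type :=
  Fin (dr (a j)) × Fin (dl (a (j + 1)))

def siteConfig (a : ZMod N → V) (b : ∀ j, Bond dl dr a j) : ZMod N → Site V dl dr :=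
  fun j => ⟨a j, (castL dl (congrArg a (sub_add_cancel j 1)).symm (b (j - 1)).2, (b j).1)⟩

def bondConfig (a : ZMod N → V) (x : ZMod N → Site V dl dr) (h : ∀ j, (x j).1 = a j) :
    ∀ j, Bond dl dr a j :=
  fun j => (castR dr (h j).symm (x j).2.2, castL dl (h (j + 1)).symm (x (j + 1)).2.1)

variable {dl dr}

theorem castL_heq {α β : V} (h : α = β) (i : Fin (dl β)) : castL dl h i ≍ i := cast_heq _ _

theorem castR_heq {α β : V} (h : α = β) (i : Fin (dr β)) : castR dr h i ≍ i := cast_heq _ _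

theorem Site.ext {s t : Site V dl dr} (h : s.1 = t.1) (hl : s.2.1 ≍ t.2.1)
    (hr : s.2.2 ≍ t.2.2) : s = t := by
  obtain ⟨α, l, r⟩ := s
  obtain ⟨β, l', r'⟩ := t
  subst h
  cases eq_of_heq hl
  cases eq_of_heq hr
  rfl

theorem Site.mk_eq_mk_iff {α : V} {p q : Fin (dl α) × Fin (dr α)} :
    (⟨α, p⟩ : Site V dl dr) = ⟨α, q⟩ ↔ p = q :=
  ⟨fun h => eq_of_heq (Sigma.mk.inj h).2, fun h => h ▸ rfl⟩

theorem bondConfig_siteConfig (a : ZMod N → V) (b : ∀ j, Bond dl dr a j)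
    (h : ∀ j, (siteConfig dl dr a b j).1 = a j) :
    bondConfig dl dr a (siteConfig dl dr a b) h = b := by
  funext j
  refine Prod.ext rfl (eq_of_heq ?_)
  dsimp only [bondConfig, siteConfig]
  refine (castL_heq _ _).trans ((castL_heq _ _).trans ?_)
  exact congr_arg_heq (fun k => (b k).2) (add_sub_cancel_right j 1)

theorem siteConfig_bondConfig (a : ZMod N → V) (x : ZMod N → Site V dl dr)
    (h : ∀ j, (x j).1 = a j) : siteConfig dl dr a (bondConfig dl dr a x h) = x := by
  funext j
  refine Site.ext (h j).symm ?_ (castR_heq (h j).symm _)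
  dsimp only [bondConfig, siteConfig]
  refine (castL_heq _ _).trans ((castL_heq _ _).trans ?_)
  exact congr_arg_heq (fun k => (x k).2.1) (sub_add_cancel j 1)

variable (dl dr N) in
def sectorEquiv : (Σ a : ZMod N → V, ∀ j, Bond dl dr a j) ≃ (ZMod N → Site V dl dr) where
  toFun p := siteConfig dl dr p.1 p.2
  invFun x := ⟨fun j => (x j).1, bondConfig dl dr _ x fun _ => rfl⟩
  left_inv _ := Sigma.ext rfl (heq_of_eq (bondConfig_siteConfig _ _ fun _ => rfl))
  right_inv x := siteConfig_bondConfig _ x fun _ => rfl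

theorem siteConfig_left_succ (a : ZMod N → V) (b : ∀ j, Bond dl dr a j) (j : ZMod N) :
    (siteConfig dl dr a b (j + 1)).2.1 = (b j).2 := by
  show castL dl (congrArg a (sub_add_cancel (j + 1) 1)).symm (b (j + 1 - 1)).2 = (b j).2
  apply eq_of_heq
  refine (castL_heq _ _).trans ?_
  exact congr_arg_heq (fun k => (b k).2) (add_sub_cancel_right j 1)

theorem siteConfig_apply_eq_iff {a : ZMod N → V} {b b' : ∀ j, Bond dl dr a j} {i : ZMod N} :
    siteConfig dl dr a b i = siteConfig dl dr a b' i ↔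
      (b (i - 1)).2 = (b' (i - 1)).2 ∧ (b i).1 = (b' i).1 :=
  Site.mk_eq_mk_iff.trans (by simp only [Prod.mk.injEq, castL, cast_inj])

theorem siteConfig_left_eq_iff {a : ZMod N → V} {b b' : ∀ j, Bond dl dr a j} {i : ZMod N} :
    (siteConfig dl dr a b i).2.1 = (siteConfig dl dr a b' i).2.1 ↔
      (b (i - 1)).2 = (b' (i - 1)).2 :=
  cast_inj _

theorem siteConfig_agree_iff (h1 : (1 : ZMod N) ≠ 0) {a : ZMod N → V}
    {b b' : ∀ j, Bond dl dr a j} (j : ZMod N) :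
    ((∀ i, i ≠ j → i ≠ j + 1 → siteConfig dl dr a b i = siteConfig dl dr a b' i) ∧
      (siteConfig dl dr a b j).2.1 = (siteConfig dl dr a b' j).2.1 ∧
      (siteConfig dl dr a b (j + 1)).2.2 = (siteConfig dl dr a b' (j + 1)).2.2) ↔
      ∀ k ≠ j, b k = b' k := by
  simp only [siteConfig_apply_eq_iff, siteConfig_left_eq_iff]
  constructor
  · rintro ⟨hoff, hleft, hright⟩ k hk
    refine Prod.ext ?_ ?_
    · by_cases hk' : k = j + 1
      · subst hk'
        exact hright
      · exact (hoff k hk hk').2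
    · by_cases hk' : k + 1 = j
      · obtain rfl := eq_sub_of_add_eq hk'
        exact hleft
      · have hk1 := (hoff (k + 1) hk' fun h => hk (add_right_cancel h)).1
        rwa [add_sub_cancel_right] at hk1
  · intro h
    refine ⟨fun i hi hi' => ⟨congrArg Prod.snd (h _ ?_), congrArg Prod.fst (h i hi)⟩,
      congrArg Prod.snd (h _ ?_), congrArg Prod.fst (h _ (add_ne_left.mpr h1))⟩
    · exact fun h' => hi' (sub_eq_iff_eq_add.mp h')
    · simpa using h1

variable [NeZero N]
  (Q : ∀ α β : V, Matrix (Fin (dr α) × Fin (dl β)) (Fin (dr α) × Fin (dl β)) ℂ)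

def sectorHamiltonian (a : ZMod N → V) :
    Matrix (∀ j, Bond dl dr a j) (∀ j, Bond dl dr a j) ℂ :=
  ∑ j, onFactor j (Q (a j) (a (j + 1)))

theorem ker_sectorHamiltonian (hQherm : ∀ α β, (Q α β).IsHermitian)
    (hQidem : ∀ α β, Q α β * Q α β = Q α β) (a : ZMod N → V) :
    LinearMap.ker (sectorHamiltonian Q a).mulVecLin =
      Submodule.span ℂ {g | ∃ f : ∀ j, Bond dl dr a j → ℂ,
        (∀ j, Q (a j) (a (j + 1)) *ᵥ f j = 0) ∧ g = fun b => ∏ j, f j (b j)} :=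
  ker_sum_onFactor (fun _ => hQherm _ _) fun _ => hQidem _ _

theorem sum_eq_sum_siteConfig [Fintype V] {M : Type*} [AddCommMonoid M]
    (F : (ZMod N → Site V dl dr) → M) :
    ∑ x, F x = ∑ a, ∑ b, F (siteConfig dl dr a b) := by
  rw [← (sectorEquiv dl dr N).sum_comp, Fintype.sum_sigma]
  rfl

variable [DecidableEq V]

variable (dl dr) in
def sectorExt (a : ZMod N → V) :
    ((∀ j, Bond dl dr a j) → ℂ) →ₗ[ℂ] (ZMod N → Site V dl dr) → ℂ where
  toFun g x := if h : ∀ j, (x j).1 = a j then g (bondConfig dl dr a x h) else 0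
  map_add' g g' := by
    funext x
    by_cases h : ∀ j, (x j).1 = a j <;> simp [h]
  map_smul' c g := by
    funext x
    by_cases h : ∀ j, (x j).1 = a j <;> simp [h]

theorem prodVec_eq_sectorExt (a : ZMod N → V) (f : ∀ j, Bond dl dr a j → ℂ) :
    prodVec V dl dr N a f = sectorExt dl dr a (fun b => ∏ j, f j (b j)) :=
  rfl

theorem sectorExt_siteConfig (a : ZMod N → V) (g : (∀ j, Bond dl dr a j) → ℂ)
    (b : ∀ j, Bond dl dr a j) : sectorExt dl dr a g (siteConfig dl dr a b) = g b := by
  simp only [sectorExt, LinearMap.coe_mk, AddHom.coe_mk]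
  rw [dif_pos (show ∀ j, (siteConfig dl dr a b j).1 = a j from fun _ => rfl),
    bondConfig_siteConfig]

theorem sectorExt_siteConfig_of_ne {a a' : ZMod N → V} (h : a' ≠ a)
    (g : (∀ j, Bond dl dr a j) → ℂ) (b : ∀ j, Bond dl dr a' j) :
    sectorExt dl dr a g (siteConfig dl dr a' b) = 0 :=
  dif_neg fun hc => h (funext hc)

theorem sum_sectorExt [Fintype V] (v : (ZMod N → Site V dl dr) → ℂ) :
    ∑ a, sectorExt dl dr a (v ∘ siteConfig dl dr a) = v := by
  funext x
  obtain ⟨⟨a, b⟩, rfl⟩ := (sectorEquiv dl dr N).surjective x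
  rw [Finset.sum_apply, Finset.sum_eq_single a]
  · exact sectorExt_siteConfig a _ b
  · exact fun a' _ h => sectorExt_siteConfig_of_ne (Ne.symm h) _ b
  · simp

variable [Fintype V]

theorem Pblock_eq_zero_of_fst_ne {j i : ZMod N} {x y : ZMod N → Site V dl dr}
    (hi : (x i).1 ≠ (y i).1) : Pblock V dl dr Q N j x y = 0 := by
  simp only [Pblock, of_apply]
  by_cases hij : i = j
  · subst hij
    rw [dif_neg fun h => hi h.1, mul_zero]
  by_cases hij' : i = j + 1
  · subst hij'
    rw [dif_neg fun h => hi h.2, mul_zero]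
  rw [if_neg fun h => hi (congrArg Sigma.fst (h i hij hij')), zero_mul]

theorem Pblock_siteConfig (h1 : (1 : ZMod N) ≠ 0) (j : ZMod N) (a : ZMod N → V)
    (b b' : ∀ j, Bond dl dr a j) :
    Pblock V dl dr Q N j (siteConfig dl dr a b) (siteConfig dl dr a b') =
      onFactor j (Q (a j) (a (j + 1))) b b' := by
  have hagree := siteConfig_agree_iff h1 (b := b) (b' := b') j
  simp only [Pblock, onFactor, of_apply]
  rw [dif_pos ⟨rfl, rfl⟩]
  have hbond : ∀ c : ∀ j, Bond dl dr a j,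
      (((siteConfig dl dr a c j).2.2, (siteConfig dl dr a c (j + 1)).2.1) : Bond dl dr a j) = c j :=
    fun c => Prod.ext rfl (siteConfig_left_succ a c j)
  rw [ite_zero_mul_ite_zero, one_mul]
  exact if_congr hagree (congrArg₂ (Q (a j) (a (j + 1))) (hbond b) (hbond b')) rfl

theorem Hblock_mulVec_siteConfig (h1 : (1 : ZMod N) ≠ 0) (v : (ZMod N → Site V dl dr) → ℂ)
    (a : ZMod N → V) (b : ∀ j, Bond dl dr a j) :
    (Hblock V dl dr Q N *ᵥ v) (siteConfig dl dr a b) =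
      (sectorHamiltonian Q a *ᵥ (v ∘ siteConfig dl dr a)) b := by
  simp only [Hblock, sectorHamiltonian, sum_mulVec, Finset.sum_apply]
  refine Finset.sum_congr rfl fun j _ => ?_
  change ∑ x, _ * v x = ∑ b', _ * v (siteConfig dl dr a b')
  rw [sum_eq_sum_siteConfig, Finset.sum_eq_single a]
  · simp only [Pblock_siteConfig Q h1]
  · intro a' _ ha'
    obtain ⟨i, hi⟩ := Function.ne_iff.mp ha'
    exact Finset.sum_eq_zero fun b' _ => by
      rw [Pblock_eq_zero_of_fst_ne Q (i := i) (Ne.symm hi), zero_mul]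
  · simp

theorem mem_ker_Hblock_iff (h1 : (1 : ZMod N) ≠ 0) {v : (ZMod N → Site V dl dr) → ℂ} :
    v ∈ LinearMap.ker (Hblock V dl dr Q N).mulVecLin ↔
      ∀ a, v ∘ siteConfig dl dr a ∈ LinearMap.ker (sectorHamiltonian Q a).mulVecLin := by
  simp only [LinearMap.mem_ker, mulVecLin_apply, funext_iff, Pi.zero_apply,
    ← Hblock_mulVec_siteConfig Q h1]
  exact (sectorEquiv dl dr N).surjective.forall.trans Sigma.forall

theorem prodVec_mem_ker_Hblock (hQherm : ∀ α β, (Q α β).IsHermitian)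
    (hQidem : ∀ α β, Q α β * Q α β = Q α β) (h1 : (1 : ZMod N) ≠ 0) {a : ZMod N → V}
    {f : ∀ j, Bond dl dr a j → ℂ} (hf : ∀ j, Q (a j) (a (j + 1)) *ᵥ f j = 0) :
    prodVec V dl dr N a f ∈ LinearMap.ker (Hblock V dl dr Q N).mulVecLin := by
  rw [prodVec_eq_sectorExt, mem_ker_Hblock_iff Q h1]
  intro a'
  by_cases ha : a' = a
  · subst ha
    have hprod : sectorExt dl dr a' (fun b => ∏ j, f j (b j)) ∘ siteConfig dl dr a' =
        fun b => ∏ j, f j (b j) :=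
      funext (sectorExt_siteConfig a' _)
    rw [hprod, ker_sectorHamiltonian Q hQherm hQidem]
    exact Submodule.subset_span ⟨f, hf, rfl⟩
  · have hzero : sectorExt dl dr a (fun b => ∏ j, f j (b j)) ∘ siteConfig dl dr a' = 0 :=
      funext (sectorExt_siteConfig_of_ne ha _)
    rw [hzero]
    exact Submodule.zero_mem _

end Chain

/-- the kernel of the block-diagonal Hamiltonian
`H_N = Σ_{j∈ℤ/N} P_{j,j+1}` is `⊕_{(α^1,…,α^N)} ⊗_j ker Q_{α_r^j, α_l^{j+1}}`, i.e. the
span of the elementary product vectors built from configurations `a : ℤ/N → V` and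
kernel vectors `f j ∈ ker Q_{(a j)_r, (a (j+1))_l}`. -/
theorem stmt_13 (V : Type*) [Fintype V] [DecidableEq V] (dl dr : V → ℕ)
    (Q : ∀ α β : V, Matrix (Fin (dr α) × Fin (dl β)) (Fin (dr α) × Fin (dl β)) ℂ)
    (hQherm : ∀ α β, (Q α β).IsHermitian)
    (hQidem : ∀ α β, Q α β * Q α β = Q α β)
    (N : ℕ) [NeZero N] (hN : 2 ≤ N) :
    LinearMap.ker (Hblock V dl dr Q N).mulVecLin
      = Submodule.span ℂ {v : (ZMod N → Site V dl dr) → ℂ |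
          ∃ (a : ZMod N → V)
            (f : ∀ j : ZMod N, Fin (dr (a j)) × Fin (dl (a (j + 1))) → ℂ),
            (∀ j, (Q (a j) (a (j + 1))).mulVec (f j) = 0) ∧
            v = prodVec V dl dr N a f} := by
  have h1 : (1 : ZMod N) ≠ 0 := by
    have : Fact (1 < N) := ⟨hN⟩
    exact one_ne_zero
  apply le_antisymm
  · intro v hv
    rw [← sum_sectorExt v]
    refine Submodule.sum_mem _ fun a _ => ?_
    have hva := (mem_ker_Hblock_iff Q h1).mp hv a
    rw [ker_sectorHamiltonian Q hQherm hQidem] at hva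
    refine (Submodule.span_le (p := (Submodule.span ℂ _).comap (sectorExt dl dr a))).mpr ?_ hva
    rintro _ ⟨f, hf, rfl⟩
    exact Submodule.subset_span ⟨a, f, hf, (prodVec_eq_sectorExt a f).symm⟩
  · rw [Submodule.span_le]
    rintro _ ⟨a, f, hf, rfl⟩
    exact prodVec_mem_ker_Hblock Q hQherm hQidem h1 hf
end

section
/- Let h_{j,j+1} be positive semidefinite nearest-neighbor terms of a translational invariant Hamiltonian H_N = Σ_j h_{j,j+1} on a periodic chain, and suppose there exists a positive definite operator X on ℂ^d such that (h ⊗ I)(I ⊗ X ⊗ I)(I ⊗ h) = (I ⊗ h)(I ⊗ X ⊗ I)(h ⊗ I) as operators on three consecutive sites. Define h' = (X^{1/2} ⊗ X^{1/2}) h (X^{1/2} ⊗ X^{1/2}). Then the new nearest-neighbor terms commute: [h'_{j-1,j} ⊗ I, I ⊗ h'_{j,j+1}] = 0 on three consecutive sites. -/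
/-!
Write `Y = X^{1/2}` and let `r₁, r₂, r₃` be `Y` acting on the first, second and third site.
These commute with each other, `h ⊗ I` commutes with `r₃` and `I ⊗ h` with `r₁`, and
`h'₁₂ = (r₁ r₂) h₁₂ (r₁ r₂)`, `h'₂₃ = (r₂ r₃) h₂₃ (r₂ r₃)`. Moving the commuting factors outwards,
both `h'₁₂ h'₂₃` and `h'₂₃ h'₁₂` become `c · (middle) · c` with `c = r₁ r₂ r₃`, where the middle is
`h₁₂ X₂ h₂₃` resp. `h₂₃ X₂ h₁₂`; these agree by the intertwining hypothesis.
-/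

open Matrix
open scoped Kronecker ComplexOrder

/-- The square root of a positive semidefinite matrix, as defined in the older Mathlib
(`Matrix.PosSemidef.sqrt`, since removed). -/
noncomputable def Matrix.PosSemidef.sqrt {n 𝕜 : Type*} [Fintype n] [RCLike 𝕜] [DecidableEq n]
    {A : Matrix n n 𝕜} (hA : A.PosSemidef) : Matrix n n 𝕜 :=
  hA.1.eigenvectorUnitary.1 * diagonal ((↑) ∘ Real.sqrt ∘ hA.1.eigenvalues) *
  (star hA.1.eigenvectorUnitary : Matrix n n 𝕜)

theorem Matrix.PosSemidef.mul_self_sqrt {n 𝕜 : Type*} [Fintype n] [RCLike 𝕜] [DecidableEq n]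
    {A : Matrix n n 𝕜} (hA : A.PosSemidef) : hA.sqrt * hA.sqrt = A := by
  have hsq : diagonal ((↑) ∘ Real.sqrt ∘ hA.1.eigenvalues) *
      diagonal ((↑) ∘ Real.sqrt ∘ hA.1.eigenvalues) = diagonal ((↑) ∘ hA.1.eigenvalues : n → 𝕜) := by
    rw [diagonal_mul_diagonal]
    congr 1 with i
    simp [← RCLike.ofReal_mul, Real.mul_self_sqrt (hA.eigenvalues_nonneg i)]
  calc hA.sqrt * hA.sqrt
      = hA.1.eigenvectorUnitary.1 * (diagonal ((↑) ∘ Real.sqrt ∘ hA.1.eigenvalues) *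
          ((star hA.1.eigenvectorUnitary : Matrix n n 𝕜) * hA.1.eigenvectorUnitary.1) *
          diagonal ((↑) ∘ Real.sqrt ∘ hA.1.eigenvalues)) *
          (star hA.1.eigenvectorUnitary : Matrix n n 𝕜) := by
        simp only [sqrt, mul_assoc]
    _ = A := by
        rw [Unitary.coe_star_mul_self, mul_one, hsq]
        simpa [Unitary.conjStarAlgAut_apply] using hA.1.spectral_theorem.symm

theorem conj_mul_conj_eq_of_commute {M : Type*} [Monoid M] {a b r₁ r₂ r₃ : M}
    (h₁₂ : Commute r₁ r₂) (h₁₃ : Commute r₁ r₃) (h₂₃ : Commute r₂ r₃)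
    (ha : Commute a r₃) (hb : Commute b r₁) :
    r₁ * r₂ * a * (r₁ * r₂) * (r₂ * r₃ * b * (r₂ * r₃))
      = r₁ * r₂ * r₃ * (a * (r₂ * r₂) * b) * (r₁ * r₂ * r₃) := by
  have hmid : r₁ * (r₂ * r₂) * r₃ = r₃ * (r₂ * r₂) * r₁ := by
    rw [(h₁₂.mul_right h₁₂).eq, mul_assoc, h₁₃.eq, ← mul_assoc, (h₂₃.mul_left h₂₃).eq]
  calc r₁ * r₂ * a * (r₁ * r₂) * (r₂ * r₃ * b * (r₂ * r₃))
      = r₁ * r₂ * (a * (r₁ * (r₂ * r₂) * r₃) * b) * (r₂ * r₃) := by simp only [mul_assoc]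
    _ = r₁ * r₂ * (r₃ * a * (r₂ * r₂) * (b * r₁)) * (r₂ * r₃) := by
        rw [hmid, ← ha.eq, hb.eq]; simp only [mul_assoc]
    _ = _ := by simp only [mul_assoc]

theorem commute_conj_of_intertwine {M : Type*} [Monoid M] {a b r₁ r₂ r₃ : M}
    (h₁₂ : Commute r₁ r₂) (h₁₃ : Commute r₁ r₃) (h₂₃ : Commute r₂ r₃)
    (ha : Commute a r₃) (hb : Commute b r₁) (hab : a * (r₂ * r₂) * b = b * (r₂ * r₂) * a) :
    Commute (r₁ * r₂ * a * (r₁ * r₂)) (r₂ * r₃ * b * (r₂ * r₃)) := by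
  have hc : r₁ * r₂ * r₃ = r₃ * r₂ * r₁ := by
    rw [h₁₂.eq, mul_assoc, h₁₃.eq, ← mul_assoc, h₂₃.eq]
  calc r₁ * r₂ * a * (r₁ * r₂) * (r₂ * r₃ * b * (r₂ * r₃))
      = r₁ * r₂ * r₃ * (a * (r₂ * r₂) * b) * (r₁ * r₂ * r₃) :=
        conj_mul_conj_eq_of_commute h₁₂ h₁₃ h₂₃ ha hb
    _ = r₃ * r₂ * r₁ * (b * (r₂ * r₂) * a) * (r₃ * r₂ * r₁) := by rw [hab, hc]
    _ = r₂ * r₃ * b * (r₂ * r₃) * (r₁ * r₂ * a * (r₁ * r₂)) := by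
        rw [← conj_mul_conj_eq_of_commute h₂₃.symm h₁₃.symm h₁₂.symm hb ha, h₂₃.eq, h₁₂.eq]

section Kronecker

variable {R l m n : Type*} [CommSemiring R] [Fintype l] [Fintype m] [Fintype n]

theorem Commute.kronecker {A A' : Matrix l l R} {B B' : Matrix m m R}
    (hA : Commute A A') (hB : Commute B B') : Commute (A ⊗ₖ B) (A' ⊗ₖ B') := by
  rw [Commute, SemiconjBy, ← mul_kronecker_mul, ← mul_kronecker_mul, hA.eq, hB.eq]

theorem Commute.submatrix_equiv {A B : Matrix m m R} (e : l ≃ m) (h : Commute A B) :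
    Commute (A.submatrix e e) (B.submatrix e e) := by
  rw [Commute, SemiconjBy, submatrix_mul_equiv, submatrix_mul_equiv, h.eq]

variable [DecidableEq n]

theorem Matrix.commute_kronecker_conj_of_intertwine (h : Matrix (n × n) (n × n) R) {X Y : Matrix n n R}
    (hY : Y * Y = X)
    (hinter : (h ⊗ₖ (1 : Matrix n n R)).submatrix (Equiv.prodAssoc n n n).symm
          (Equiv.prodAssoc n n n).symm * ((1 : Matrix n n R) ⊗ₖ (X ⊗ₖ (1 : Matrix n n R))) *
        ((1 : Matrix n n R) ⊗ₖ h)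
      = ((1 : Matrix n n R) ⊗ₖ h) * ((1 : Matrix n n R) ⊗ₖ (X ⊗ₖ (1 : Matrix n n R))) *
        (h ⊗ₖ (1 : Matrix n n R)).submatrix (Equiv.prodAssoc n n n).symm
          (Equiv.prodAssoc n n n).symm) :
    Commute ((((Y ⊗ₖ Y) * h * (Y ⊗ₖ Y)) ⊗ₖ (1 : Matrix n n R)).submatrix
        (Equiv.prodAssoc n n n).symm (Equiv.prodAssoc n n n).symm)
      ((1 : Matrix n n R) ⊗ₖ ((Y ⊗ₖ Y) * h * (Y ⊗ₖ Y))) := by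
  set σ := (Equiv.prodAssoc n n n).symm
  set r₁ : Matrix (n × n × n) (n × n × n) R := Y ⊗ₖ 1
  set r₂ : Matrix (n × n × n) (n × n × n) R := 1 ⊗ₖ (Y ⊗ₖ 1)
  set r₃ : Matrix (n × n × n) (n × n × n) R := 1 ⊗ₖ (1 ⊗ₖ Y)
  have hleft : (((Y ⊗ₖ Y) * h * (Y ⊗ₖ Y)) ⊗ₖ (1 : Matrix n n R)).submatrix σ σ
      = r₁ * r₂ * (h ⊗ₖ 1).submatrix σ σ * (r₁ * r₂) := by
    have hY₁₂ : r₁ * r₂ = ((Y ⊗ₖ Y) ⊗ₖ (1 : Matrix n n R)).submatrix σ σ := by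
      simp [r₁, r₂, σ, ← mul_kronecker_mul]
    rw [hY₁₂, submatrix_mul_equiv, submatrix_mul_equiv, ← mul_kronecker_mul,
      ← mul_kronecker_mul, mul_one, mul_one]
  have hright : (1 : Matrix n n R) ⊗ₖ ((Y ⊗ₖ Y) * h * (Y ⊗ₖ Y))
      = r₂ * r₃ * (1 ⊗ₖ h) * (r₂ * r₃) := by
    simp [r₂, r₃, ← mul_kronecker_mul]
  have hX : r₂ * r₂ = 1 ⊗ₖ (X ⊗ₖ 1) := by
    simp [r₂, ← mul_kronecker_mul, hY]
  have hr₃ : r₃ = ((1 : Matrix (n × n) (n × n) R) ⊗ₖ Y).submatrix σ σ := by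
    rw [← one_kronecker_one, kronecker_assoc']
  rw [hleft, hright]
  refine commute_conj_of_intertwine ?_ ?_ ?_ ?_ ?_ (hX ▸ hinter)
  · exact (Commute.one_right Y).kronecker (Commute.one_left _)
  · exact (Commute.one_right Y).kronecker (Commute.one_left _)
  · exact (Commute.one_left 1).kronecker ((Commute.one_right Y).kronecker (Commute.one_left _))
  · exact hr₃ ▸ ((Commute.one_right h).kronecker (Commute.one_left Y)).submatrix_equiv σ
  · exact (Commute.one_left Y).kronecker (Commute.one_right h)

end Kronecker

theorem stmt_17_general (d : ℕ) (h : Matrix (Fin d × Fin d) (Fin d × Fin d) ℂ)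
    (X : Matrix (Fin d) (Fin d) ℂ) (hX : X.PosDef)
    (hinter :
      ((h ⊗ₖ (1 : Matrix (Fin d) (Fin d) ℂ)).submatrix
          (Equiv.prodAssoc (Fin d) (Fin d) (Fin d)).symm
          (Equiv.prodAssoc (Fin d) (Fin d) (Fin d)).symm) *
        ((1 : Matrix (Fin d) (Fin d) ℂ) ⊗ₖ (X ⊗ₖ (1 : Matrix (Fin d) (Fin d) ℂ))) *
        ((1 : Matrix (Fin d) (Fin d) ℂ) ⊗ₖ h)
      = ((1 : Matrix (Fin d) (Fin d) ℂ) ⊗ₖ h) *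
        ((1 : Matrix (Fin d) (Fin d) ℂ) ⊗ₖ (X ⊗ₖ (1 : Matrix (Fin d) (Fin d) ℂ))) *
        ((h ⊗ₖ (1 : Matrix (Fin d) (Fin d) ℂ)).submatrix
          (Equiv.prodAssoc (Fin d) (Fin d) (Fin d)).symm
          (Equiv.prodAssoc (Fin d) (Fin d) (Fin d)).symm)) :
    ((((hX.posSemidef.sqrt ⊗ₖ hX.posSemidef.sqrt) * h *
        (hX.posSemidef.sqrt ⊗ₖ hX.posSemidef.sqrt)) ⊗ₖ
          (1 : Matrix (Fin d) (Fin d) ℂ)).submatrix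
        (Equiv.prodAssoc (Fin d) (Fin d) (Fin d)).symm
        (Equiv.prodAssoc (Fin d) (Fin d) (Fin d)).symm) *
      ((1 : Matrix (Fin d) (Fin d) ℂ) ⊗ₖ
        ((hX.posSemidef.sqrt ⊗ₖ hX.posSemidef.sqrt) * h *
          (hX.posSemidef.sqrt ⊗ₖ hX.posSemidef.sqrt)))
    = ((1 : Matrix (Fin d) (Fin d) ℂ) ⊗ₖ
        ((hX.posSemidef.sqrt ⊗ₖ hX.posSemidef.sqrt) * h *
          (hX.posSemidef.sqrt ⊗ₖ hX.posSemidef.sqrt))) *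
      ((((hX.posSemidef.sqrt ⊗ₖ hX.posSemidef.sqrt) * h *
          (hX.posSemidef.sqrt ⊗ₖ hX.posSemidef.sqrt)) ⊗ₖ
            (1 : Matrix (Fin d) (Fin d) ℂ)).submatrix
        (Equiv.prodAssoc (Fin d) (Fin d) (Fin d)).symm
        (Equiv.prodAssoc (Fin d) (Fin d) (Fin d)).symm) :=
  (Matrix.commute_kronecker_conj_of_intertwine h hX.posSemidef.mul_self_sqrt hinter).eq

/-- if a positive definite `X` intertwines the nearest-neighbor term `h`
as `(h ⊗ I)(I ⊗ X ⊗ I)(I ⊗ h) = (I ⊗ h)(I ⊗ X ⊗ I)(h ⊗ I)`, then the conjugated terms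
`h' = (X^{1/2} ⊗ X^{1/2}) h (X^{1/2} ⊗ X^{1/2})` on overlapping pairs commute. -/
theorem stmt_17 (d : ℕ) (h : Matrix (Fin d × Fin d) (Fin d × Fin d) ℂ)
    (hh : h.PosSemidef) (X : Matrix (Fin d) (Fin d) ℂ) (hX : X.PosDef)
    (hinter :
      ((h ⊗ₖ (1 : Matrix (Fin d) (Fin d) ℂ)).submatrix
          (Equiv.prodAssoc (Fin d) (Fin d) (Fin d)).symm
          (Equiv.prodAssoc (Fin d) (Fin d) (Fin d)).symm) *
        ((1 : Matrix (Fin d) (Fin d) ℂ) ⊗ₖ (X ⊗ₖ (1 : Matrix (Fin d) (Fin d) ℂ))) *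
        ((1 : Matrix (Fin d) (Fin d) ℂ) ⊗ₖ h)
      = ((1 : Matrix (Fin d) (Fin d) ℂ) ⊗ₖ h) *
        ((1 : Matrix (Fin d) (Fin d) ℂ) ⊗ₖ (X ⊗ₖ (1 : Matrix (Fin d) (Fin d) ℂ))) *
        ((h ⊗ₖ (1 : Matrix (Fin d) (Fin d) ℂ)).submatrix
          (Equiv.prodAssoc (Fin d) (Fin d) (Fin d)).symm
          (Equiv.prodAssoc (Fin d) (Fin d) (Fin d)).symm)) :
    ((((hX.posSemidef.sqrt ⊗ₖ hX.posSemidef.sqrt) * h *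
        (hX.posSemidef.sqrt ⊗ₖ hX.posSemidef.sqrt)) ⊗ₖ
          (1 : Matrix (Fin d) (Fin d) ℂ)).submatrix
        (Equiv.prodAssoc (Fin d) (Fin d) (Fin d)).symm
        (Equiv.prodAssoc (Fin d) (Fin d) (Fin d)).symm) *
      ((1 : Matrix (Fin d) (Fin d) ℂ) ⊗ₖ
        ((hX.posSemidef.sqrt ⊗ₖ hX.posSemidef.sqrt) * h *
          (hX.posSemidef.sqrt ⊗ₖ hX.posSemidef.sqrt)))
    = ((1 : Matrix (Fin d) (Fin d) ℂ) ⊗ₖ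
        ((hX.posSemidef.sqrt ⊗ₖ hX.posSemidef.sqrt) * h *
          (hX.posSemidef.sqrt ⊗ₖ hX.posSemidef.sqrt))) *
      ((((hX.posSemidef.sqrt ⊗ₖ hX.posSemidef.sqrt) * h *
          (hX.posSemidef.sqrt ⊗ₖ hX.posSemidef.sqrt)) ⊗ₖ
            (1 : Matrix (Fin d) (Fin d) ℂ)).submatrix
        (Equiv.prodAssoc (Fin d) (Fin d) (Fin d)).symm
        (Equiv.prodAssoc (Fin d) (Fin d) (Fin d)).symm) :=
  stmt_17_general d h X hX hinter
end
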